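/- arXiv:2105.13419 — 5 statements merged into one kernel-verified Lean document; each statement's English description precedes it below -/
import Mathlib

section
/- Let ξ, ξ_1, ξ_2, … be i.i.d. random elements of a measurable space Ξ with law P, and let IF : Ξ → ℝ^d be measurable with E_P[IF(ξ)] = 0 and entrywise finite covariance matrix. Let Z : ℝ^d → ℝ be twice differentiable at a point x* ∈ ℝ^d with ∇Z(x*) = 0, and write H = ∇²Z(x*). Let K ∈ ℝ^d be a fixed vector, let λ_n → 0 be a real sequence, and let x̂_n be ℝ^d-valued random vectors satisfying x̂_n − x* = D_n + λ_n·K + R_n, where D_n = (1/n)·Σ_{i=1}^n IF(ξ_i) and R_n/(n^{−1/2} + |λ_n|) → 0 in probability. Then Z(x̂_n) − Z(x*) = (1/2)·D_nᵀ H D_n + (1/2)·λ_n²·Kᵀ H K + λ_n·Kᵀ H D_n + E_n, where E_n/(n^{−1} + λ_n²) → 0 in probability as n → ∞. -/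
/-!
Write `h_n = x̂_n - x* = D_n + λ_n K + R_n` and `a_n = n^{-1/2} + |λ_n|`. Chebyshev's inequality
for the centred i.i.d. sum gives `√n ‖D_n‖ = O_p(1)`, so `‖h_n‖ / a_n = O_p(1)` and `h_n → 0` in
probability. Since `∇Z(x*) = 0`, the second-order Taylor remainder of `Z` at `x*` is `o(‖h‖²)`, and
by symmetry of `H` the quadratic form splits as
`½ H(h, h) = ½ H(D, D) + ½ λ² H(K, K) + λ H(K, D) + H(D + λK + ½R, R)`.
Both the Taylor remainder and the cross term with `R_n` are `o_p(a_n²)`, and `a_n² ≤ 2(1/n + λ_n²)`.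
-/

open MeasureTheory ProbabilityTheory Filter
open scoped Topology

/-- The empirical average `(1/n) ∑_{i<n} IF(ξ_i ω)` of the influence function. -/
noncomputable def empAvg {Ω Ξ : Type*} {d : ℕ} (ξ : ℕ → Ω → Ξ)
    (IF : Ξ → EuclideanSpace ℝ (Fin d)) (n : ℕ) (ω : Ω) : EuclideanSpace ℝ (Fin d) :=
  (n : ℝ)⁻¹ • ∑ i ∈ Finset.range n, IF (ξ i ω)

open Asymptotics
open scoped ENNReal

namespace MeasureTheory

variable {Ω ι E : Type*} [MeasurableSpace Ω] {μ : Measure Ω} {l : Filter ι}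

/-- `X = O_p(1)` along `l`. -/
def BoundedInProbability [Norm E] (μ : Measure Ω) (X : ι → Ω → E) (l : Filter ι) : Prop :=
  ∀ δ : ℝ≥0∞, 0 < δ → ∃ C : ℝ, ∀ᶠ i in l, μ {ω | C ≤ ‖X i ω‖} ≤ δ

section SeminormedAddCommGroup

variable [SeminormedAddCommGroup E]

theorem tendstoInMeasure_zero_iff {X : ι → Ω → E} :
    TendstoInMeasure μ X l (fun _ => 0) ↔
      ∀ ε, 0 < ε → Tendsto (fun i => μ {ω | ε ≤ ‖X i ω‖}) l (𝓝 0) := by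
  simp only [tendstoInMeasure_iff_norm, sub_zero]

theorem tendstoInMeasure_const_of_tendsto {a : ι → E} {c : E} (ha : Tendsto a l (𝓝 c)) :
    TendstoInMeasure μ (fun i _ => a i) l (fun _ => c) := by
  refine tendstoInMeasure_iff_norm.2 fun ε hε => tendsto_const_nhds.congr' ?_
  filter_upwards [tendsto_iff_norm_sub_tendsto_zero.1 ha |>.eventually_lt_const hε] with i hi
  simp [not_le.2 hi]

theorem TendstoInMeasure.of_norm_le {X : ι → Ω → E} {Y : ι → Ω → ℝ}
    (hY : TendstoInMeasure μ Y l (fun _ => 0)) (hXY : ∀ᶠ i in l, ∀ ω, ‖X i ω‖ ≤ Y i ω) :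
    TendstoInMeasure μ X l (fun _ => 0) := by
  rw [tendstoInMeasure_zero_iff] at hY ⊢
  refine fun ε hε => tendsto_of_tendsto_of_tendsto_of_le_of_le' tendsto_const_nhds (hY ε hε)
    (Eventually.of_forall fun _ => zero_le) ?_
  filter_upwards [hXY] with i hi
  exact measure_mono fun ω (hω : ε ≤ ‖X i ω‖) => (hω.trans (hi ω)).trans (le_abs_self _)

theorem TendstoInMeasure.add {X Y : ι → Ω → E} (hX : TendstoInMeasure μ X l (fun _ => 0))
    (hY : TendstoInMeasure μ Y l (fun _ => 0)) : TendstoInMeasure μ (X + Y) l (fun _ => 0) := by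
  rw [tendstoInMeasure_zero_iff] at hX hY ⊢
  intro ε hε
  refine tendsto_of_tendsto_of_tendsto_of_le_of_le tendsto_const_nhds
    (by simpa using (hX _ (half_pos hε)).add (hY _ (half_pos hε))) (fun _ => zero_le)
    fun i => (measure_mono fun ω hω => ?_).trans (measure_union_le _ _)
  by_contra h
  simp only [Set.mem_union, Set.mem_ofPred_eq, not_or, not_le, Pi.add_apply] at h hω
  linarith [norm_add_le (X i ω) (Y i ω)]

theorem TendstoInMeasure.boundedInProbability {X : ι → Ω → E}
    (hX : TendstoInMeasure μ X l (fun _ => 0)) : BoundedInProbability μ X l :=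
  fun _ hδ => ⟨1, (tendstoInMeasure_zero_iff.1 hX 1 one_pos).eventually (Iic_mem_nhds hδ)⟩

theorem boundedInProbability_const (c : E) : BoundedInProbability μ (fun (_ : ι) (_ : Ω) => c) l :=
  fun δ _ => ⟨‖c‖ + 1, Eventually.of_forall fun _ => by norm_num⟩

theorem BoundedInProbability.add {X Y : ι → Ω → E}
    (hX : BoundedInProbability μ X l) (hY : BoundedInProbability μ Y l) :
    BoundedInProbability μ (X + Y) l := by
  intro δ hδ
  obtain ⟨C, hC⟩ := hX (δ / 2) (ENNReal.half_pos hδ.ne')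
  obtain ⟨C', hC'⟩ := hY (δ / 2) (ENNReal.half_pos hδ.ne')
  refine ⟨C + C', ?_⟩
  filter_upwards [hC, hC'] with i hi hi'
  refine (measure_mono fun ω hω => ?_).trans ((measure_union_le _ _).trans
    ((add_le_add hi hi').trans (ENNReal.add_halves δ).le))
  by_contra h
  simp only [Set.mem_union, Set.mem_ofPred_eq, not_or, not_le, Pi.add_apply] at h hω
  linarith [norm_add_le (X i ω) (Y i ω)]

end SeminormedAddCommGroup

theorem TendstoInMeasure.mul_boundedInProbability {X Y : ι → Ω → ℝ}
    (hX : TendstoInMeasure μ X l (fun _ => 0)) (hY : BoundedInProbability μ Y l) :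
    TendstoInMeasure μ (X * Y) l (fun _ => 0) := by
  rw [tendstoInMeasure_zero_iff] at hX ⊢
  intro ε hε
  refine ENNReal.tendsto_nhds_zero.2 fun δ hδ => ?_
  obtain ⟨C, hC⟩ := hY (δ / 2) (ENNReal.half_pos hδ.ne')
  set C' := max C 1
  filter_upwards [hC, (hX (ε / C') (by positivity)).eventually
    (Iic_mem_nhds (ENNReal.half_pos hδ.ne'))] with i hi hi'
  refine (measure_mono fun ω hω => ?_).trans ((measure_union_le _ _).trans
    ((add_le_add hi' hi).trans (ENNReal.add_halves δ).le))
  by_contra h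
  simp only [Set.mem_union, Set.mem_ofPred_eq, not_or, not_le, Pi.mul_apply, norm_mul] at h hω
  have hC'C : C ≤ C' := le_max_left _ _
  have : ‖X i ω‖ * ‖Y i ω‖ < ε / C' * C' :=
    mul_lt_mul'' h.1 (h.2.trans_le hC'C) (norm_nonneg _) (norm_nonneg _)
  rw [div_mul_cancel₀ _ (by positivity)] at this
  linarith

theorem TendstoInMeasure.comp_of_tendsto {E F : Type*} [PseudoMetricSpace E] [PseudoMetricSpace F]
    {X : ι → Ω → E} {c : E} {g : E → F} {b : F} (hX : TendstoInMeasure μ X l (fun _ => c))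
    (hg : Tendsto g (𝓝 c) (𝓝 b)) :
    TendstoInMeasure μ (fun i ω => g (X i ω)) l (fun _ => b) := by
  rw [tendstoInMeasure_iff_dist] at hX ⊢
  intro ε hε
  obtain ⟨δ, hδ, hgδ⟩ := Metric.tendsto_nhds_nhds.1 hg ε hε
  refine tendsto_of_tendsto_of_tendsto_of_le_of_le tendsto_const_nhds (hX δ hδ)
    (fun _ => zero_le) fun i => measure_mono fun ω hω => ?_
  by_contra h
  exact not_lt.2 hω (hgδ (not_le.1 h))

end MeasureTheory

namespace ProbabilityTheory

variable {Ω ι : Type*} [MeasurableSpace Ω] {μ : Measure Ω} [IsFiniteMeasure μ]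

theorem integral_finsetSum_sq_of_pairwise_indepFun {Y : ι → Ω → ℝ} (s : Finset ι)
    (hY : ∀ i, MemLp (Y i) 2 μ) (hmean : ∀ i, μ[Y i] = 0)
    (hind : Pairwise fun i j => IndepFun (Y i) (Y j) μ) :
    ∫ ω, (∑ i ∈ s, Y i ω) ^ 2 ∂μ = ∑ i ∈ s, ∫ ω, Y i ω ^ 2 ∂μ := by
  have hsum_mean : μ[∑ i ∈ s, Y i] = 0 := by
    rw [Finset.sum_fn, integral_finsetSum _ fun i _ => (hY i).integrable one_le_two]
    simp [hmean]
  have hvar := IndepFun.variance_sum (s := s) (fun i _ => hY i)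
    fun i _ j _ hij => hind hij
  rw [variance_of_integral_eq_zero (memLp_finsetSum' s fun i _ => hY i).aemeasurable hsum_mean]
    at hvar
  simp only [Finset.sum_apply] at hvar
  rw [hvar]
  exact Finset.sum_congr rfl fun i _ => variance_of_integral_eq_zero (hY i).aemeasurable (hmean i)

variable {κ : Type*} [Fintype κ]

theorem integral_norm_finsetSum_sq_of_pairwise_indepFun {X : ι → Ω → EuclideanSpace ℝ κ}
    (s : Finset ι) (hX : ∀ i, MemLp (X i) 2 μ) (hmean : ∀ i, μ[X i] = 0)
    (hind : Pairwise fun i j => IndepFun (X i) (X j) μ) :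
    ∫ ω, ‖∑ i ∈ s, X i ω‖ ^ 2 ∂μ = ∑ i ∈ s, ∫ ω, ‖X i ω‖ ^ 2 ∂μ := by
  have hcoord : ∀ i k, MemLp (fun ω => X i ω k) 2 μ := fun i k =>
    (EuclideanSpace.proj k : EuclideanSpace ℝ κ →L[ℝ] ℝ).comp_memLp' (hX i)
  have hcoord_mean : ∀ i k, μ[fun ω => X i ω k] = 0 := fun i k => by
    simpa [hmean i] using
      (EuclideanSpace.proj k : EuclideanSpace ℝ κ →L[ℝ] ℝ).integral_comp_comm
        ((hX i).integrable one_le_two)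
  have hcoord_ind : ∀ k, Pairwise fun i j => IndepFun (fun ω => X i ω k) (fun ω => X j ω k) μ :=
    fun k i j hij => (hind hij).comp (EuclideanSpace.proj k).continuous.measurable
      (EuclideanSpace.proj k).continuous.measurable
  have hsum_coord : ∀ ω k, (∑ i ∈ s, X i ω) k = ∑ i ∈ s, X i ω k := fun ω k => by
    simp [WithLp.ofLp_sum]
  simp_rw [EuclideanSpace.real_norm_sq_eq, hsum_coord]
  rw [integral_finsetSum _ fun k _ => (memLp_finsetSum s fun i _ => hcoord i k).integrable_sq]
  simp_rw [integral_finsetSum _ fun k _ => (hcoord _ k).integrable_sq,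
    integral_finsetSum_sq_of_pairwise_indepFun s (fun i => hcoord i _) (fun i => hcoord_mean i _)
      (hcoord_ind _)]
  exact Finset.sum_comm

theorem meas_sqrt_mul_norm_average_ge_le {X : ℕ → Ω → EuclideanSpace ℝ κ}
    (hX : ∀ i, MemLp (X i) 2 μ) (hmean : ∀ i, μ[X i] = 0)
    (hind : Pairwise fun i j => IndepFun (X i) (X j) μ) {V : ℝ}
    (hV : ∀ i, ∫ ω, ‖X i ω‖ ^ 2 ∂μ ≤ V) {C : ℝ} (hC : 0 < C) (n : ℕ) :
    μ {ω | C ≤ √n * ‖(n : ℝ)⁻¹ • ∑ i ∈ Finset.range n, X i ω‖} ≤ ENNReal.ofReal (V / C ^ 2) := by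
  rcases n.eq_zero_or_pos with rfl | hn
  · simp [not_le.2 hC]
  have hn' : (0 : ℝ) < n := Nat.cast_pos.2 hn
  have hsub : {ω | C ≤ √n * ‖(n : ℝ)⁻¹ • ∑ i ∈ Finset.range n, X i ω‖}
      ⊆ {ω | C ^ 2 * n ≤ ‖∑ i ∈ Finset.range n, X i ω‖ ^ 2} := fun ω (hω : C ≤ _) => by
    rw [norm_smul, norm_inv, Real.norm_natCast, ← mul_assoc] at hω
    have h2 := pow_le_pow_left₀ hC.le hω 2
    rw [mul_pow, mul_pow, Real.sq_sqrt hn'.le] at h2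
    field_simp at h2
    exact h2
  have hmarkov := mul_meas_ge_le_integral_of_nonneg
    (ae_of_all μ fun ω => sq_nonneg ‖∑ i ∈ Finset.range n, X i ω‖)
    (memLp_finsetSum _ fun i _ => hX i).norm.integrable_sq (C ^ 2 * n)
  rw [integral_norm_finsetSum_sq_of_pairwise_indepFun _ hX hmean hind] at hmarkov
  have hsum : ∑ i ∈ Finset.range n, ∫ ω, ‖X i ω‖ ^ 2 ∂μ ≤ n * V := by
    simpa using Finset.sum_le_sum fun i (_ : i ∈ Finset.range n) => hV i
  refine (measure_mono hsub).trans ?_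
  rw [← ofReal_measureReal]
  refine ENNReal.ofReal_le_ofReal ((le_div_iff₀' (by positivity)).2 ?_)
  nlinarith

end ProbabilityTheory

section SecondOrderExpansion

variable {E : Type*} [NormedAddCommGroup E] [NormedSpace ℝ E]
  {Z : E → ℝ} {Z' : E → E →L[ℝ] ℝ} {H : E →L[ℝ] E →L[ℝ] ℝ} {x : E}

theorem abs_sub_sub_half_apply_le {δ ε : ℝ} (hε : 0 ≤ ε)
    (hball : ∀ y ∈ Metric.ball x δ,
      HasFDerivAt Z (Z' y) y ∧ ‖Z' y - Z' x - H (y - x)‖ ≤ ε * ‖y - x‖)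
    (hgrad : Z' x = 0) {h : E} (hh : ‖h‖ < δ) :
    |Z (x + h) - Z x - (1 / 2) * H h h| ≤ ε * ‖h‖ ^ 2 := by
  have hseg : ∀ t ∈ Set.Icc (0 : ℝ) 1, x + t • h ∈ Metric.ball x δ ∧ ‖t • h‖ ≤ ‖h‖ := by
    intro t ht
    have : ‖t • h‖ ≤ ‖h‖ := by
      rw [norm_smul, Real.norm_of_nonneg ht.1]
      exact mul_le_of_le_one_left (norm_nonneg h) ht.2
    exact ⟨by simpa [dist_eq_norm] using this.trans_lt hh, this⟩
  have hderiv : ∀ t ∈ Set.Icc (0 : ℝ) 1, HasDerivWithinAt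
      (fun t => Z (x + t • h) - (1 / 2) * t ^ 2 * H h h)
      (Z' (x + t • h) h - t * H h h) (Set.Icc 0 1) t := by
    intro t ht
    have hline : HasDerivAt (fun s : ℝ => x + s • h) h t := by
      simpa using ((hasDerivAt_id t).smul_const h).const_add x
    have hquad : HasDerivAt (fun s : ℝ => (1 / 2) * s ^ 2 * H h h) (t * H h h) t :=
      (((hasDerivAt_pow 2 t).const_mul (1 / 2 : ℝ)).mul_const (H h h)).congr_deriv (by ring)
    exact (((hball _ (hseg t ht).1).1.comp_hasDerivAt t hline).sub hquad).hasDerivWithinAt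
  have hbound : ∀ t ∈ Set.Ico (0 : ℝ) 1, ‖Z' (x + t • h) h - t * H h h‖ ≤ ε * ‖h‖ ^ 2 := by
    intro t ht
    obtain ⟨hmem, hth⟩ := hseg t (Set.Ico_subset_Icc_self ht)
    have hlin := (hball _ hmem).2
    rw [add_sub_cancel_left] at hlin
    have heq : Z' (x + t • h) h - t * H h h = (Z' (x + t • h) - Z' x - H (t • h)) h := by
      simp [hgrad]
    calc ‖Z' (x + t • h) h - t * H h h‖
        ≤ ‖Z' (x + t • h) - Z' x - H (t • h)‖ * ‖h‖ := heq ▸ ContinuousLinearMap.le_opNorm _ _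
      _ ≤ ε * ‖t • h‖ * ‖h‖ := by gcongr
      _ ≤ ε * ‖h‖ ^ 2 := by
        rw [sq, ← mul_assoc]
        gcongr
  simpa [sub_right_comm] using norm_image_sub_le_of_norm_deriv_le_segment_01' hderiv hbound

theorem isLittleO_sub_sub_half_apply (hZ' : ∀ᶠ y in 𝓝 x, HasFDerivAt Z (Z' y) y)
    (hZ'' : HasFDerivAt Z' H x) (hgrad : Z' x = 0) :
    (fun h => Z (x + h) - Z x - (1 / 2) * H h h) =o[𝓝 0] fun h => ‖h‖ ^ 2 := by
  refine isLittleO_iff.2 fun ε hε => ?_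
  obtain ⟨δ, hδ, hball⟩ := Metric.eventually_nhds_iff_ball.1 (hZ'.and (hZ''.isLittleO.def hε))
  filter_upwards [Metric.ball_mem_nhds 0 hδ] with h hh
  rw [Real.norm_eq_abs, norm_pow, norm_norm]
  exact abs_sub_sub_half_apply_le hε.le hball hgrad (mem_ball_zero_iff.1 hh)

noncomputable def taylorRemainderRatio (Z : E → ℝ) (x : E) (H : E →L[ℝ] E →L[ℝ] ℝ) (h : E) : ℝ :=
  (Z (x + h) - Z x - (1 / 2) * H h h) / ‖h‖ ^ 2

theorem taylorRemainderRatio_mul_norm_sq (h : E) :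
    taylorRemainderRatio Z x H h * ‖h‖ ^ 2 = Z (x + h) - Z x - (1 / 2) * H h h := by
  rcases eq_or_ne h 0 with rfl | hh
  · simp
  · exact div_mul_cancel₀ _ (by positivity)

theorem tendsto_taylorRemainderRatio (hZ' : ∀ᶠ y in 𝓝 x, HasFDerivAt Z (Z' y) y)
    (hZ'' : HasFDerivAt Z' H x) (hgrad : Z' x = 0) :
    Tendsto (taylorRemainderRatio Z x H) (𝓝 0) (𝓝 0) :=
  (isLittleO_sub_sub_half_apply hZ' hZ'' hgrad).tendsto_div_nhds_zero

theorem half_apply_add_smul_add (hH : ∀ v w, H v w = H w v) (D K R : E) (l : ℝ) :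
    (1 / 2) * H (D + l • K + R) (D + l • K + R)
      = (1 / 2) * H D D + (1 / 2) * l ^ 2 * H K K + l * H K D
        + H (D + l • K + (1 / 2 : ℝ) • R) R := by
  simp only [map_add, map_smul, add_apply, FunLike.coe_smul,
    Pi.smul_apply, smul_eq_mul]
  rw [hH K D, hH R D, hH R K]
  ring

theorem norm_add_smul_add_le {D K R : E} {l a β σ : ℝ} (hD : ‖D‖ ≤ a * β) (hl : |l| ≤ a)
    (hR : ‖R‖ ≤ a * σ) : ‖D + l • K + R‖ ≤ a * (β + ‖K‖ + σ) := by
  have hlK : ‖l • K‖ ≤ a * ‖K‖ := by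
    rw [norm_smul, Real.norm_eq_abs]
    gcongr
  calc ‖D + l • K + R‖ ≤ ‖D‖ + ‖l • K‖ + ‖R‖ := norm_add₃_le
    _ ≤ a * (β + ‖K‖ + σ) := by linarith

theorem abs_sub_sub_quadratic_le (hH : ∀ v w, H v w = H w v) {D K R : E} {l a β σ : ℝ}
    (hD : ‖D‖ ≤ a * β) (hl : |l| ≤ a) (hR : ‖R‖ ≤ a * σ) :
    |Z (x + (D + l • K + R)) - Z x - ((1 / 2) * H D D + (1 / 2) * l ^ 2 * H K K + l * H K D)|
      ≤ a ^ 2 * (|taylorRemainderRatio Z x H (D + l • K + R)| * (β + ‖K‖ + σ) ^ 2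
        + ‖H‖ * (β + ‖K‖ + σ) * σ) := by
  set h := D + l • K + R
  have hsplit : Z (x + h) - Z x - ((1 / 2) * H D D + (1 / 2) * l ^ 2 * H K K + l * H K D)
      = taylorRemainderRatio Z x H h * ‖h‖ ^ 2 + H (D + l • K + (1 / 2 : ℝ) • R) R := by
    rw [taylorRemainderRatio_mul_norm_sq, half_apply_add_smul_add hH]
    ring
  have hh := norm_add_smul_add_le (K := K) hD hl hR
  have hhalf := norm_add_smul_add_le (K := K) (R := (1 / 2 : ℝ) • R) (σ := σ) hD hl <| by
    rw [norm_smul, Real.norm_of_nonneg one_half_pos.le]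
    linarith [norm_nonneg R]
  have hcross : |H (D + l • K + (1 / 2 : ℝ) • R) R| ≤ ‖H‖ * (a * (β + ‖K‖ + σ)) * (a * σ) :=
    calc |H (D + l • K + (1 / 2 : ℝ) • R) R|
        ≤ ‖H‖ * ‖D + l • K + (1 / 2 : ℝ) • R‖ * ‖R‖ := H.le_opNorm₂ _ _
      _ ≤ ‖H‖ * (a * (β + ‖K‖ + σ)) * (a * σ) :=
        mul_le_mul (mul_le_mul_of_nonneg_left hhalf (norm_nonneg H)) hR (norm_nonneg R)
          (mul_nonneg (norm_nonneg H) ((norm_nonneg _).trans hh))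
  rw [hsplit]
  calc |taylorRemainderRatio Z x H h * ‖h‖ ^ 2 + H (D + l • K + (1 / 2 : ℝ) • R) R|
      ≤ |taylorRemainderRatio Z x H h| * ‖h‖ ^ 2 + |H (D + l • K + (1 / 2 : ℝ) • R) R| := by
        refine (abs_add_le (taylorRemainderRatio Z x H h * ‖h‖ ^ 2) _).trans_eq ?_
        rw [abs_mul, abs_of_nonneg (sq_nonneg ‖h‖)]
    _ ≤ |taylorRemainderRatio Z x H h| * (a * (β + ‖K‖ + σ)) ^ 2
        + ‖H‖ * (a * (β + ‖K‖ + σ)) * (a * σ) := by gcongr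
    _ = _ := by ring

theorem le_inv_sqrt_add_abs_mul {x : ℝ} (hx : 0 ≤ x) (l : ℝ) {n : ℕ} (hn : 0 < n) :
    x ≤ (1 / √n + |l|) * (√n * x) := by
  have hsqrt : 0 < √(n : ℝ) := by positivity
  calc x = 1 / √n * (√n * x) := by field_simp
    _ ≤ (1 / √n + |l|) * (√n * x) := by gcongr; exact le_add_of_nonneg_right (abs_nonneg l)

theorem norm_add_smul_add_le_inv_sqrt_add_abs (D K R : E) (l : ℝ) {n : ℕ} (hn : 0 < n) :
    ‖D + l • K + R‖ ≤ (1 / √n + |l|) * (√n * ‖D‖ + ‖K‖ + ‖R‖ / (1 / √n + |l|)) :=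
  norm_add_smul_add_le (le_inv_sqrt_add_abs_mul (norm_nonneg D) l hn)
    (le_add_of_nonneg_left (by positivity)) (mul_div_cancel₀ _ (by positivity)).symm.le

theorem abs_sub_sub_quadratic_div_le (hH : ∀ v w, H v w = H w v) (D K R : E) (l : ℝ) {n : ℕ}
    (hn : 0 < n) :
    |(Z (x + D + l • K + R) - Z x - ((1 / 2) * H D D + (1 / 2) * l ^ 2 * H K K + l * H K D))
        / (1 / n + l ^ 2)|
      ≤ 2 * (|taylorRemainderRatio Z x H (D + l • K + R)|
          * (√n * ‖D‖ + ‖K‖ + ‖R‖ / (1 / √n + |l|)) ^ 2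
        + ‖H‖ * (√n * ‖D‖ + ‖K‖ + ‖R‖ / (1 / √n + |l|)) * (‖R‖ / (1 / √n + |l|))) := by
  set a := 1 / √n + |l|
  have hbound := abs_sub_sub_quadratic_le (Z := Z) (x := x) (K := K) hH
    (le_inv_sqrt_add_abs_mul (norm_nonneg D) l hn) (le_add_of_nonneg_left (by positivity))
    (mul_div_cancel₀ ‖R‖ (by positivity : a ≠ 0)).symm.le
  have ha_sq : a ^ 2 ≤ 2 * (1 / n + l ^ 2) := by
    have hsq : (1 / √(n : ℝ)) ^ 2 = 1 / n := by rw [div_pow, one_pow, Real.sq_sqrt n.cast_nonneg]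
    nlinarith [sq_nonneg (1 / √(n : ℝ) - |l|), sq_abs l]
  rw [add_assoc x, add_assoc x, abs_div, abs_of_pos (by positivity : (0 : ℝ) < 1 / n + l ^ 2),
    div_le_iff₀ (by positivity)]
  exact hbound.trans ((mul_le_mul_of_nonneg_right ha_sq (by positivity)).trans_eq (by ring))

end SecondOrderExpansion

theorem boundedInProbability_sqrt_mul_norm_empAvg {Ω Ξ : Type*} [MeasurableSpace Ω]
    {μ : Measure Ω} [IsFiniteMeasure μ] [MeasurableSpace Ξ] {P : Measure Ξ} {d : ℕ}
    {ξ : ℕ → Ω → Ξ} (hξmeas : ∀ i, Measurable (ξ i))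
    (hindep : Pairwise fun i j => IndepFun (ξ i) (ξ j) μ) (hlaw : ∀ i, Measure.map (ξ i) μ = P)
    {IF : Ξ → EuclideanSpace ℝ (Fin d)} (hIFmeas : Measurable IF) (hIFmean : ∫ x, IF x ∂P = 0)
    (hIFL2 : MemLp IF 2 P) :
    BoundedInProbability μ (fun (n : ℕ) ω => √n * ‖empAvg ξ IF n ω‖) atTop := by
  have hmean : ∀ i, μ[fun ω => IF (ξ i ω)] = 0 := fun i => by
    rw [← hIFmean, ← hlaw i, integral_map (hξmeas i).aemeasurable hIFmeas.aestronglyMeasurable]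
  have hsq : ∀ i, ∫ ω, ‖IF (ξ i ω)‖ ^ 2 ∂μ ≤ ∫ x, ‖IF x‖ ^ 2 ∂P := fun i => by
    rw [← hlaw i, integral_map (hξmeas i).aemeasurable
      (hIFmeas.norm.pow_const 2).aestronglyMeasurable]
  intro δ hδ
  have hV : Tendsto (fun C : ℝ => ENNReal.ofReal ((∫ x, ‖IF x‖ ^ 2 ∂P) / C ^ 2)) atTop (𝓝 0) := by
    simpa using ENNReal.tendsto_ofReal
      (tendsto_const_nhds.div_atTop (tendsto_pow_atTop two_ne_zero))
  obtain ⟨C, hCδ, hC⟩ := ((hV.eventually (Iic_mem_nhds hδ)).and (eventually_gt_atTop 0)).exists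
  refine ⟨C, Eventually.of_forall fun n => le_of_eq_of_le ?_ ((meas_sqrt_mul_norm_average_ge_le
    (fun i => hIFL2.comp_measurePreserving ⟨hξmeas i, hlaw i⟩) hmean
    (fun i j hij => (hindep hij).comp hIFmeas hIFmeas) hsq hC n).trans hCδ)⟩
  simp [empAvg, abs_of_nonneg, Real.sqrt_nonneg]

theorem optimality_gap_expansion_general
    {Ω : Type*} [MeasurableSpace Ω] {μ : Measure Ω} [IsProbabilityMeasure μ]
    {Ξ : Type*} [MeasurableSpace Ξ] {P : Measure Ξ}
    {d : ℕ}
    -- i.i.d. data with law P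
    (ξ : ℕ → Ω → Ξ) (hξmeas : ∀ i, Measurable (ξ i))
    (hindep : iIndepFun ξ μ)
    (hlaw : ∀ i, Measure.map (ξ i) μ = P)
    -- influence function: measurable, centered, with entrywise finite covariance
    (IF : Ξ → EuclideanSpace ℝ (Fin d)) (hIFmeas : Measurable IF)
    (hIFmean : ∫ x, IF x ∂P = 0) (hIFL2 : MemLp IF 2 P)
    -- Z twice differentiable at x* with vanishing gradient; H = ∇²Z(x*)
    (Z : EuclideanSpace ℝ (Fin d) → ℝ) (xs : EuclideanSpace ℝ (Fin d))
    (Z' : EuclideanSpace ℝ (Fin d) → EuclideanSpace ℝ (Fin d) →L[ℝ] ℝ)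
    (H : EuclideanSpace ℝ (Fin d) →L[ℝ] EuclideanSpace ℝ (Fin d) →L[ℝ] ℝ)
    (hZ' : ∀ᶠ x in 𝓝 xs, HasFDerivAt Z (Z' x) x)
    (hZ'' : HasFDerivAt Z' H xs)
    (hgrad : Z' xs = 0)
    -- tuning parameter and decomposition of the data-driven solution
    (K : EuclideanSpace ℝ (Fin d)) (lam : ℕ → ℝ)
    (hlam : Tendsto lam atTop (𝓝 (0 : ℝ)))
    (xhat R : ℕ → Ω → EuclideanSpace ℝ (Fin d))
    (hdecomp : ∀ n ω, xhat n ω = xs + empAvg ξ IF n ω + lam n • K + R n ω)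
    (hR : TendstoInMeasure μ
      (fun n ω => ‖R n ω‖ / (1 / Real.sqrt n + |lam n|)) atTop (fun _ => (0 : ℝ))) :
    -- conclusion: the optimality gap expansion with error of smaller order
    -- than 1/n + λ_n² in probability
    TendstoInMeasure μ
      (fun n ω =>
        (Z (xhat n ω) - Z xs
          - ((1 / 2) * H (empAvg ξ IF n ω) (empAvg ξ IF n ω)
            + (1 / 2) * lam n ^ 2 * H K K
            + lam n * H K (empAvg ξ IF n ω)))
        / (1 / (n : ℝ) + lam n ^ 2))
      atTop (fun _ => (0 : ℝ)) := by
  set D := empAvg ξ IF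
  set a : ℕ → ℝ := fun n => 1 / √n + |lam n|
  set w : ℕ → Ω → ℝ := fun n ω => √n * ‖D n ω‖ + ‖K‖ + ‖R n ω‖ / a n
  have hw : BoundedInProbability μ w atTop :=
    ((boundedInProbability_sqrt_mul_norm_empAvg hξmeas (fun i j hij => hindep.indepFun hij) hlaw
      hIFmeas hIFmean hIFL2).add (boundedInProbability_const ‖K‖)).add hR.boundedInProbability
  have ha : Tendsto a atTop (𝓝 0) := by
    simpa [a] using (Real.tendsto_sqrt_atTop.comp tendsto_natCast_atTop_atTop).inv_tendsto_atTop.add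
      hlam.abs
  have hh : TendstoInMeasure μ (fun n ω => D n ω + lam n • K + R n ω) atTop (fun _ => 0) :=
    ((tendstoInMeasure_const_of_tendsto ha).mul_boundedInProbability hw).of_norm_le <|
      eventually_atTop.2 ⟨1, fun n hn ω => norm_add_smul_add_le_inv_sqrt_add_abs _ _ _ _ hn⟩
  have hρ := hh.comp_of_tendsto (g := fun v => |taylorRemainderRatio Z xs H v|)
    (by simpa using (tendsto_taylorRemainderRatio hZ' hZ'' hgrad).abs)
  -- the normalised error is at most `2 (|taylorRemainderRatio h_n| w_n² + ‖H‖ w_n ‖R_n‖ / a_n)`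
  refine TendstoInMeasure.of_norm_le ((((hρ.mul_boundedInProbability hw).mul_boundedInProbability
    hw).add ((hR.mul_boundedInProbability hw).mul_boundedInProbability
      (boundedInProbability_const ‖H‖))).mul_boundedInProbability
        (boundedInProbability_const 2)) ?_
  filter_upwards [eventually_gt_atTop 0] with n hn ω
  rw [Real.norm_eq_abs, hdecomp]
  refine (abs_sub_sub_quadratic_div_le (second_derivative_symmetric_of_eventually hZ' hZ'')
    _ _ _ _ hn).trans_eq ?_
  simp only [Pi.mul_apply, Pi.add_apply, w, a]
  ring

/-- Lemma 1 of the paper: expansion of the optimality gap of a linearizable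
data-driven solution. -/
theorem optimality_gap_expansion
    {Ω : Type*} [MeasurableSpace Ω] {μ : Measure Ω} [IsProbabilityMeasure μ]
    {Ξ : Type*} [MeasurableSpace Ξ] {P : Measure Ξ} [IsProbabilityMeasure P]
    {d : ℕ}
    -- i.i.d. data with law P
    (ξ : ℕ → Ω → Ξ) (hξmeas : ∀ i, Measurable (ξ i))
    (hindep : iIndepFun ξ μ)
    (hlaw : ∀ i, Measure.map (ξ i) μ = P)
    -- influence function: measurable, centered, with entrywise finite covariance
    (IF : Ξ → EuclideanSpace ℝ (Fin d)) (hIFmeas : Measurable IF)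
    (hIFmean : ∫ x, IF x ∂P = 0) (hIFL2 : MemLp IF 2 P)
    -- Z twice differentiable at x* with vanishing gradient; H = ∇²Z(x*)
    (Z : EuclideanSpace ℝ (Fin d) → ℝ) (xs : EuclideanSpace ℝ (Fin d))
    (Z' : EuclideanSpace ℝ (Fin d) → EuclideanSpace ℝ (Fin d) →L[ℝ] ℝ)
    (H : EuclideanSpace ℝ (Fin d) →L[ℝ] EuclideanSpace ℝ (Fin d) →L[ℝ] ℝ)
    (hZ' : ∀ᶠ x in 𝓝 xs, HasFDerivAt Z (Z' x) x)
    (hZ'' : HasFDerivAt Z' H xs)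
    (hgrad : Z' xs = 0)
    -- tuning parameter and decomposition of the data-driven solution
    (K : EuclideanSpace ℝ (Fin d)) (lam : ℕ → ℝ)
    (hlam : Tendsto lam atTop (𝓝 (0 : ℝ)))
    (xhat R : ℕ → Ω → EuclideanSpace ℝ (Fin d))
    (hdecomp : ∀ n ω, xhat n ω = xs + empAvg ξ IF n ω + lam n • K + R n ω)
    (hR : TendstoInMeasure μ
      (fun n ω => ‖R n ω‖ / (1 / Real.sqrt n + |lam n|)) atTop (fun _ => (0 : ℝ))) :
    -- conclusion: the optimality gap expansion with error of smaller order
    -- than 1/n + λ_n² in probability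
    TendstoInMeasure μ
      (fun n ω =>
        (Z (xhat n ω) - Z xs
          - ((1 / 2) * H (empAvg ξ IF n ω) (empAvg ξ IF n ω)
            + (1 / 2) * lam n ^ 2 * H K K
            + lam n * H K (empAvg ξ IF n ω)))
        / (1 / (n : ℝ) + lam n ^ 2))
      atTop (fun _ => (0 : ℝ)) :=
  optimality_gap_expansion_general ξ hξmeas hindep hlaw IF hIFmeas hIFmean hIFL2 Z xs Z' H hZ' hZ''
    hgrad K lam hlam xhat R hdecomp hR
end

section
/- Let φ : [0, ∞) → [0, ∞) be convex with φ(1) = 0, and suppose φ is twice continuously differentiable in a neighborhood of t = 1 with φ''(1) > 0. Define the conjugate φ*(s) = sup_{t ≥ 0} { s·t − φ(t) } for s ∈ ℝ. Then φ* is twice continuously differentiable in a neighborhood of 0, and φ*(0) = 0, (φ*)'(0) = 1, and (φ*)''(0) = 1/φ''(1) > 0. -/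
open scoped Topology

/-- The convex conjugate `φ*(s) = sup_{t ≥ 0} { s·t − φ(t) }` of a divergence
generator `φ : [0,∞) → ℝ`. -/
noncomputable def phiConj (φ : ℝ → ℝ) (s : ℝ) : ℝ :=
  sSup ((fun t => s * t - φ t) '' Set.Ici (0 : ℝ))

/-!
Since `φ ≥ 0 = φ 1`, the point `1` is a minimum, so `φ' 1 = 0`. As `φ'' 1 > 0`, the inverse
function theorem gives a `C¹` local inverse `ψ` of `φ'` near `0` with `ψ 0 = 1`. For `s` near `0`
the point `ψ s ≥ 0` satisfies `φ' (ψ s) = s`, so by convexity the supremum defining `φ* s` is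
attained there: `φ* s = s ψ s - φ (ψ s)`. Differentiating this (the envelope theorem) gives
`(φ*)' = ψ` near `0`, whence `φ*` is `C²` with `(φ*)'' 0 = ψ' 0 = 1 / φ'' 1`.
-/

open Filter Set

theorem ConvexOn.add_mul_sub_le_of_hasDerivAt {S : Set ℝ} {f : ℝ → ℝ} {x y f' : ℝ}
    (hf : ConvexOn ℝ S f) (hx : x ∈ S) (hy : y ∈ S) (hf' : HasDerivAt f f' x) :
    f x + f' * (y - x) ≤ f y := by
  rcases lt_trichotomy y x with hyx | rfl | hxy
  · have h := hf.slope_le_of_hasDerivAt hy hx hyx hf'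
    rw [slope_def_field, div_le_iff₀ (sub_pos.2 hyx)] at h
    linarith
  · simp
  · have h := hf.le_slope_of_hasDerivAt hx hy hxy hf'
    rw [slope_def_field, le_div_iff₀ (sub_pos.2 hxy)] at h
    linarith

theorem ContDiffAt.exists_localInverse {𝕜 : Type*} [RCLike 𝕜] {f : 𝕜 → 𝕜} {a f' : 𝕜}
    {n : WithTop ℕ∞} (hf : ContDiffAt 𝕜 n f a) (hf' : HasDerivAt f f' a) (hf'0 : f' ≠ 0)
    (hn : n ≠ 0) :
    ∃ g : 𝕜 → 𝕜, ContDiffAt 𝕜 n g (f a) ∧ g (f a) = a ∧ (∀ᶠ y in 𝓝 (f a), f (g y) = y) ∧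
      HasDerivAt g f'⁻¹ (f a) := by
  have hfe := hf'.hasFDerivAt_equiv hf'0
  have hga : hf.localInverse hfe hn (f a) = a := hf.localInverse_apply_image hfe hn
  have hfg : ∀ᶠ y in 𝓝 (f a), f (hf.localInverse hfe hn y) = y :=
    (hf.hasStrictFDerivAt' hfe hn).eventually_right_inverse
  have hg := hf.to_localInverse hfe hn
  exact ⟨_, hg, hga, hfg, .of_local_left_inverse hg.continuousAt (hga.symm ▸ hf') hf'0 hfg⟩

theorem contDiffAt_succ_of_eventually_hasDerivAt {𝕜 F : Type*} [NontriviallyNormedField 𝕜]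
    [NormedAddCommGroup F] [NormedSpace 𝕜 F] {f f' : 𝕜 → F} {x : 𝕜} {n : ℕ}
    (hf : ∀ᶠ y in 𝓝 x, HasDerivAt f (f' y) y) (hf' : ContDiffAt 𝕜 n f' x) :
    ContDiffAt 𝕜 (n + 1) f x :=
  contDiffAt_succ_iff_hasFDerivAt.2
    ⟨fun y => (1 : 𝕜 →L[𝕜] 𝕜).smulRight (f' y), ⟨_, hf, fun _ hy => hy.hasFDerivAt⟩, by fun_prop⟩

theorem hasDerivAt_mul_sub_comp_of_hasDerivAt {φ ψ : ℝ → ℝ} {s : ℝ}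
    (hψ : DifferentiableAt ℝ ψ s) (hφ : HasDerivAt φ s (ψ s)) :
    HasDerivAt (fun u => u * ψ u - φ (ψ u)) (ψ s) s := by
  have h := ((hasDerivAt_id' s).mul hψ.hasDerivAt).sub (hφ.comp s hψ.hasDerivAt)
  rwa [one_mul, add_sub_cancel_right] at h

theorem phiConj_eq_of_hasDerivAt {φ : ℝ → ℝ} (hconv : ConvexOn ℝ (Ici 0) φ) {s t : ℝ}
    (ht : 0 ≤ t) (hφ : HasDerivAt φ s t) : phiConj φ s = s * t - φ t := by
  refine IsGreatest.csSup_eq ⟨⟨t, ht, rfl⟩, ?_⟩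
  rintro _ ⟨u, hu, rfl⟩
  have := hconv.add_mul_sub_le_of_hasDerivAt ht hu hφ
  linarith

theorem eventually_hasDerivAt_phiConj {φ ψ : ℝ → ℝ} (hconv : ConvexOn ℝ (Ici 0) φ) {a : ℝ}
    (hψ : ∀ᶠ s in 𝓝 a, 0 ≤ ψ s ∧ DifferentiableAt ℝ ψ s ∧ HasDerivAt φ s (ψ s)) :
    ∀ᶠ s in 𝓝 a, HasDerivAt (phiConj φ) (ψ s) s := by
  filter_upwards [hψ.eventually_nhds] with s hs
  obtain ⟨-, hψs, hφs⟩ := hs.self_of_nhds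
  have heq : phiConj φ =ᶠ[𝓝 s] fun u => u * ψ u - φ (ψ u) :=
    hs.mono fun u hu => phiConj_eq_of_hasDerivAt hconv hu.1 hu.2.2
  exact (hasDerivAt_mul_sub_comp_of_hasDerivAt hψs hφs).congr_of_eventuallyEq heq

/-- Lemma 2 of the paper: smoothness of the conjugate φ-function. If
`φ : [0,∞) → [0,∞)` is convex with `φ(1) = 0` and twice continuously differentiable
near `1` with `φ''(1) > 0`, then `φ*` is twice continuously differentiable near `0`,
with `φ*(0) = 0`, `(φ*)'(0) = 1` and `(φ*)''(0) = 1/φ''(1) > 0`. -/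
theorem phiConj_smoothness
    (φ : ℝ → ℝ)
    (hconv : ConvexOn ℝ (Set.Ici (0 : ℝ)) φ)
    (hnonneg : ∀ t, 0 ≤ t → 0 ≤ φ t)
    (hone : φ 1 = 0)
    (hsmooth : ∃ s ∈ 𝓝 (1 : ℝ), ContDiffOn ℝ 2 φ s)
    (hsecond : 0 < deriv (deriv φ) 1) :
    (∃ s ∈ 𝓝 (0 : ℝ), ContDiffOn ℝ 2 (phiConj φ) s) ∧
    phiConj φ 0 = 0 ∧
    deriv (phiConj φ) 0 = 1 ∧
    deriv (deriv (phiConj φ)) 0 = 1 / deriv (deriv φ) 1 ∧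
    0 < deriv (deriv (phiConj φ)) 0 := by
  obtain ⟨S, hS, hφS⟩ := hsmooth
  have hφ : ContDiffAt ℝ 2 φ 1 := hφS.contDiffAt hS
  have hφ' : ContDiffAt ℝ 1 (deriv φ) 1 := hφ.derivWithin (by norm_num)
  have hmin : IsLocalMin φ 1 := by
    filter_upwards [eventually_gt_nhds one_pos] with t ht
    exact hone ▸ hnonneg t ht.le
  have hφ1 : HasDerivAt φ 0 1 := hmin.deriv_eq_zero ▸ (hφ.differentiableAt two_ne_zero).hasDerivAt
  obtain ⟨ψ, hψ, hψ0, hinv, hψ'⟩ := hφ'.exists_localInverse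
    (hφ'.differentiableAt one_ne_zero).hasDerivAt hsecond.ne' one_ne_zero
  rw [hφ1.deriv] at hψ hψ0 hinv hψ'
  have hψ1 : Tendsto ψ (𝓝 0) (𝓝 1) := hψ0 ▸ hψ.continuousAt.tendsto
  have hlegendre : ∀ᶠ s in 𝓝 0, 0 ≤ ψ s ∧ DifferentiableAt ℝ ψ s ∧ HasDerivAt φ s (ψ s) := by
    filter_upwards [hψ1.eventually (eventually_gt_nhds one_pos),
      hψ1.eventually (hφ.eventually (by simp)), hψ.eventually (by simp), hinv]
      with s hψpos hφs hψs hinvs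
    exact ⟨hψpos.le, hψs.differentiableAt one_ne_zero,
      by simpa only [hinvs] using (hφs.differentiableAt two_ne_zero).hasDerivAt⟩
  have hconj := eventually_hasDerivAt_phiConj hconv hlegendre
  have hderiv : deriv (phiConj φ) =ᶠ[𝓝 0] ψ := hconj.mono fun s hs => hs.deriv
  have hderiv2 : deriv (deriv (phiConj φ)) 0 = (deriv (deriv φ) 1)⁻¹ := by
    rw [hderiv.deriv_eq, hψ'.deriv]
  refine ⟨(contDiffAt_succ_of_eventually_hasDerivAt hconj hψ).contDiffOn le_rfl (by simp),
    ?_, hconj.self_of_nhds.deriv.trans hψ0, hderiv2.trans (one_div _).symm,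
    hderiv2 ▸ inv_pos.2 hsecond⟩
  rw [phiConj_eq_of_hasDerivAt hconv zero_le_one hφ1, hone, zero_mul, sub_zero]
end

section
/- Let (Ξ, 𝔉, μ) be a probability space, let h : Ξ → ℝ be a bounded measurable function, and let ψ : ℝ → ℝ be twice continuously differentiable in a neighborhood of 0 with ψ'(0) = 1 and ψ''(0) > 0. Then there exist δ > 0 and a continuously differentiable function β : (−δ, δ) → ℝ with β(0) = 0 such that for all α ∈ (−δ, δ), ∫ ψ'(α·h(ξ) − β(α)) dμ(ξ) = 1, and β'(0) = ∫ h dμ. -/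
/-!
Write `F (α, β) = ∫ ψ'(α h - β) dμ`. Since `h` is bounded, `α h - β` stays in a compact ball
around `0` on which `ψ''` is continuous and bounded, so `F` may be differentiated under the
integral sign and is `C¹` near `0`. Its partial derivatives at `0` are `ψ''(0) ∫ h dμ` and
`-ψ''(0) ≠ 0`, so the implicit function theorem yields `β` with
`F (α, β α) = F (0, 0) = ψ'(0) = 1` and `β'(0) = ∫ h dμ`.
-/

open MeasureTheory Metric
open scoped Topology

theorem ContinuousOn.aestronglyMeasurable_comp_of_ae_mem {Ξ α β : Type*} [MeasurableSpace Ξ]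
    [TopologicalSpace α] [MeasurableSpace α] [OpensMeasurableSpace α] [TopologicalSpace β]
    [TopologicalSpace.PseudoMetrizableSpace β] [SecondCountableTopologyEither α β] {μ : Measure Ξ}
    {g : α → β} {s : Set α} (hg : ContinuousOn g s) (hs : MeasurableSet s) {f : Ξ → α}
    (hf : AEMeasurable f μ) (hfs : ∀ᵐ x ∂μ, f x ∈ s) :
    AEStronglyMeasurable (fun x ↦ g (f x)) μ := by
  have hrestrict : (μ.map f).restrict s = μ.map f :=
    Measure.restrict_eq_self_of_ae_mem ((ae_map_iff hf hs).2 hfs)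
  exact (hrestrict ▸ hg.aestronglyMeasurable hs).comp_aemeasurable hf

theorem ContinuousLinearMap.apply_mem_closedBall_of_norm_le {E : Type*} [NormedAddCommGroup E]
    [NormedSpace ℝ E] {L : E →L[ℝ] ℝ} {K ρ : ℝ} (hL : ‖L‖ ≤ K) {p : E} (hp : p ∈ ball 0 ρ) :
    L p ∈ closedBall 0 (|K| * ρ) := by
  rw [mem_closedBall_zero_iff]
  rw [mem_ball_zero_iff] at hp
  calc ‖L p‖ ≤ ‖L‖ * ‖p‖ := L.le_opNorm p
    _ ≤ |K| * ρ := mul_le_mul (hL.trans (le_abs_self K)) hp.le (norm_nonneg _) (abs_nonneg K)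

section IntegralCompApply

variable {Ξ E : Type*} [MeasurableSpace Ξ] [NormedAddCommGroup E] [NormedSpace ℝ E]
  {μ : Measure Ξ} {ℓ : Ξ → E →L[ℝ] ℝ} {K r ρ : ℝ}

theorem ae_forall_apply_mem_closedBall (hK : ∀ᵐ x ∂μ, ‖ℓ x‖ ≤ K) :
    ∀ᵐ x ∂μ, ∀ p ∈ ball (0 : E) ρ, ℓ x p ∈ closedBall 0 (|K| * ρ) :=
  hK.mono fun _ hx _ hp ↦ (ContinuousLinearMap.apply_mem_closedBall_of_norm_le hx hp)

theorem aestronglyMeasurable_comp_apply (hℓ : AEStronglyMeasurable ℓ μ)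
    (hK : ∀ᵐ x ∂μ, ‖ℓ x‖ ≤ K) {G : ℝ → ℝ} (hG : ContinuousOn G (ball 0 r)) (hKρ : |K| * ρ < r)
    {p : E} (hp : p ∈ ball 0 ρ) : AEStronglyMeasurable (fun x ↦ G (ℓ x p)) μ :=
  (hG.mono (closedBall_subset_ball hKρ)).aestronglyMeasurable_comp_of_ae_mem
    measurableSet_closedBall (hℓ.apply_continuousLinearMap p).aemeasurable
    ((ae_forall_apply_mem_closedBall hK).mono fun _ hx ↦ hx p hp)

theorem exists_bound_comp_apply (hK : ∀ᵐ x ∂μ, ‖ℓ x‖ ≤ K) {G : ℝ → ℝ}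
    (hG : ContinuousOn G (ball 0 r)) (hKρ : |K| * ρ < r) :
    ∃ M, ∀ᵐ x ∂μ, ∀ p ∈ ball (0 : E) ρ, ‖G (ℓ x p)‖ ≤ M := by
  obtain ⟨M, hM⟩ := (isCompact_closedBall (0 : ℝ) (|K| * ρ)).exists_bound_of_continuousOn
    (hG.mono (closedBall_subset_ball hKρ))
  exact ⟨M, (ae_forall_apply_mem_closedBall hK).mono fun _ hx p hp ↦ hM _ (hx p hp)⟩

theorem exists_bound_comp_apply_smul (hK : ∀ᵐ x ∂μ, ‖ℓ x‖ ≤ K) {G : ℝ → ℝ}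
    (hG : ContinuousOn G (ball 0 r)) (hKρ : |K| * ρ < r) :
    ∃ M, ∀ᵐ x ∂μ, ∀ p ∈ ball (0 : E) ρ, ‖G (ℓ x p) • ℓ x‖ ≤ M := by
  obtain ⟨M, hM⟩ := exists_bound_comp_apply hK hG hKρ
  refine ⟨M * K, (hM.and hK).mono fun x ⟨hxM, hxK⟩ p hp ↦ ?_⟩
  rw [norm_smul]
  exact mul_le_mul (hxM p hp) hxK (norm_nonneg _) ((norm_nonneg _).trans (hxM p hp))

variable [IsFiniteMeasure μ]

theorem integrable_comp_apply (hℓ : AEStronglyMeasurable ℓ μ) (hK : ∀ᵐ x ∂μ, ‖ℓ x‖ ≤ K)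
    {G : ℝ → ℝ} (hG : ContinuousOn G (ball 0 r)) (hKρ : |K| * ρ < r) {p : E}
    (hp : p ∈ ball 0 ρ) : Integrable (fun x ↦ G (ℓ x p)) μ := by
  obtain ⟨M, hM⟩ := exists_bound_comp_apply hK hG hKρ
  exact (integrable_const M).mono' (aestronglyMeasurable_comp_apply hℓ hK hG hKρ hp)
    (hM.mono fun _ hx ↦ hx p hp)

theorem hasFDerivAt_integral_comp_apply (hℓ : AEStronglyMeasurable ℓ μ)
    (hK : ∀ᵐ x ∂μ, ‖ℓ x‖ ≤ K) {g : ℝ → ℝ} (hg : ContDiffOn ℝ 1 g (ball 0 r))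
    (hKρ : |K| * ρ < r) {p : E} (hp : p ∈ ball 0 ρ) :
    HasFDerivAt (fun q ↦ ∫ x, g (ℓ x q) ∂μ) (∫ x, deriv g (ℓ x p) • ℓ x ∂μ) p := by
  have hg' : ContinuousOn (deriv g) (ball 0 r) :=
    hg.continuousOn_deriv_of_isOpen isOpen_ball le_rfl
  obtain ⟨M, hM⟩ := exists_bound_comp_apply_smul hK hg' hKρ
  have hdiff : ∀ᵐ x ∂μ, ∀ q ∈ ball (0 : E) ρ,
      HasFDerivAt (fun q ↦ g (ℓ x q)) (deriv g (ℓ x q) • ℓ x) q := by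
    filter_upwards [ae_forall_apply_mem_closedBall hK] with x hx q hq
    have hgq : DifferentiableAt ℝ g (ℓ x q) := (hg.differentiableOn one_ne_zero).differentiableAt
      (isOpen_ball.mem_nhds (closedBall_subset_ball hKρ (hx q hq)))
    exact hgq.hasDerivAt.comp_hasFDerivAt q (ℓ x).hasFDerivAt
  exact hasFDerivAt_integral_of_dominated_of_fderiv_le (F := fun q x ↦ g (ℓ x q))
    (isOpen_ball.mem_nhds hp) ((isOpen_ball.eventually_mem hp).mono fun q hq ↦
      aestronglyMeasurable_comp_apply hℓ hK hg.continuousOn hKρ hq)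
    (integrable_comp_apply hℓ hK hg.continuousOn hKρ hp)
    ((aestronglyMeasurable_comp_apply hℓ hK hg' hKρ hp).smul hℓ) hM (integrable_const M) hdiff

theorem continuousOn_integral_deriv_comp_apply_smul (hℓ : AEStronglyMeasurable ℓ μ)
    (hK : ∀ᵐ x ∂μ, ‖ℓ x‖ ≤ K) {g : ℝ → ℝ} (hg : ContDiffOn ℝ 1 g (ball 0 r))
    (hKρ : |K| * ρ < r) :
    ContinuousOn (fun p ↦ ∫ x, deriv g (ℓ x p) • ℓ x ∂μ) (ball (0 : E) ρ) := by
  have hg' : ContinuousOn (deriv g) (ball 0 r) :=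
    hg.continuousOn_deriv_of_isOpen isOpen_ball le_rfl
  obtain ⟨M, hM⟩ := exists_bound_comp_apply_smul hK hg' hKρ
  refine continuousOn_of_dominated
    (fun p hp ↦ (aestronglyMeasurable_comp_apply hℓ hK hg' hKρ hp).smul hℓ)
    (fun p hp ↦ hM.mono fun _ hx ↦ hx p hp) (integrable_const M) ?_
  filter_upwards [ae_forall_apply_mem_closedBall hK] with x hx
  exact (hg'.comp (ℓ x).continuous.continuousOn
    fun q hq ↦ closedBall_subset_ball hKρ (hx q hq)).smul continuousOn_const

theorem contDiffAt_integral_comp_apply (hℓ : AEStronglyMeasurable ℓ μ)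
    (hK : ∀ᵐ x ∂μ, ‖ℓ x‖ ≤ K) {g : ℝ → ℝ} (hr : 0 < r) (hg : ContDiffOn ℝ 1 g (ball 0 r)) :
    ContDiffAt ℝ 1 (fun p : E ↦ ∫ x, g (ℓ x p) ∂μ) 0 := by
  obtain ⟨ρ, hρ, hKρ⟩ := exists_pos_mul_lt hr |K|
  exact contDiffAt_one_iff.2 ⟨_, ball 0 ρ, ball_mem_nhds 0 hρ,
    continuousOn_integral_deriv_comp_apply_smul hℓ hK hg hKρ,
    fun p hp ↦ hasFDerivAt_integral_comp_apply hℓ hK hg hKρ hp⟩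

theorem hasFDerivAt_integral_comp_apply_zero (hℓ : AEStronglyMeasurable ℓ μ)
    (hK : ∀ᵐ x ∂μ, ‖ℓ x‖ ≤ K) {g : ℝ → ℝ} (hr : 0 < r) (hg : ContDiffOn ℝ 1 g (ball 0 r)) :
    HasFDerivAt (fun p : E ↦ ∫ x, g (ℓ x p) ∂μ) (deriv g 0 • ∫ x, ℓ x ∂μ) 0 := by
  obtain ⟨ρ, hρ, hKρ⟩ := exists_pos_mul_lt hr |K|
  simpa [integral_smul] using hasFDerivAt_integral_comp_apply hℓ hK hg hKρ (mem_ball_self hρ)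

end IntegralCompApply

theorem ContDiffAt.exists_implicitFunction {f : ℝ × ℝ → ℝ} {u : ℝ × ℝ} (hf : ContDiffAt ℝ 1 f u)
    (h₂ : fderiv ℝ f u (0, 1) ≠ 0) :
    ∃ β : ℝ → ℝ, β u.1 = u.2 ∧ deriv β u.1 = -fderiv ℝ f u (1, 0) / fderiv ℝ f u (0, 1) ∧
      ∀ᶠ α in 𝓝 u.1, ContDiffAt ℝ 1 β α ∧ f (α, β α) = f u := by
  set e := ContinuousLinearEquiv.unitsEquivAut ℝ (Units.mk0 _ h₂)
  have he : (e : ℝ →L[ℝ] ℝ) = fderiv ℝ f u ∘L .inr ℝ ℝ ℝ := by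
    ext; simp [e, ContinuousLinearEquiv.unitsEquivAut_apply]
  have hinv : (fderiv ℝ f u ∘L .inr ℝ ℝ ℝ).IsInvertible :=
    he ▸ ContinuousLinearMap.isInvertible_equiv
  refine ⟨hf.implicitFunction one_ne_zero hinv, hf.implicitFunction_apply_self one_ne_zero hinv,
    ?_, ((hf.contDiffAt_implicitFunction one_ne_zero hinv).eventually (by simp)).and
      (hf.eventually_apply_implicitFunction one_ne_zero hinv)⟩
  rw [(hf.hasStrictFDerivAt_implicitFunction one_ne_zero hinv).hasFDerivAt.hasDerivAt.deriv, ← he]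
  simp [e, ContinuousLinearEquiv.unitsEquivAut_apply_symm, div_eq_mul_inv]

theorem norm_smul_fst_sub_snd_le (t : ℝ) :
    ‖t • ContinuousLinearMap.fst ℝ ℝ ℝ - ContinuousLinearMap.snd ℝ ℝ ℝ‖ ≤ |t| + 1 :=
  calc _ ≤ ‖t • ContinuousLinearMap.fst ℝ ℝ ℝ‖ + ‖ContinuousLinearMap.snd ℝ ℝ ℝ‖ := norm_sub_le _ _
    _ ≤ |t| * 1 + 1 := by
      rw [norm_smul, Real.norm_eq_abs]
      gcongr
      exacts [ContinuousLinearMap.norm_fst_le ℝ ℝ ℝ, ContinuousLinearMap.norm_snd_le ℝ ℝ ℝ]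
    _ = |t| + 1 := by rw [mul_one]

theorem contDiffAt_and_hasFDerivAt_integral_comp_mul_sub {Ξ : Type*} [MeasurableSpace Ξ]
    {μ : Measure Ξ} [IsProbabilityMeasure μ] {h : Ξ → ℝ} (hmeas : Measurable h) {C : ℝ}
    (hC : ∀ x, |h x| ≤ C)
    {g : ℝ → ℝ} {r : ℝ} (hr : 0 < r) (hg : ContDiffOn ℝ 1 g (ball 0 r)) :
    ContDiffAt ℝ 1 (fun p : ℝ × ℝ ↦ ∫ x, g (p.1 * h x - p.2) ∂μ) 0 ∧
      HasFDerivAt (fun p : ℝ × ℝ ↦ ∫ x, g (p.1 * h x - p.2) ∂μ)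
        (deriv g 0 • ((∫ x, h x ∂μ) • ContinuousLinearMap.fst ℝ ℝ ℝ -
          ContinuousLinearMap.snd ℝ ℝ ℝ)) 0 := by
  set ℓ : Ξ → ℝ × ℝ →L[ℝ] ℝ := fun x ↦
    h x • ContinuousLinearMap.fst ℝ ℝ ℝ - ContinuousLinearMap.snd ℝ ℝ ℝ
  have hℓ : AEStronglyMeasurable ℓ μ :=
    ((hmeas.smul_const _).sub_const _).aestronglyMeasurable
  have hK : ∀ᵐ x ∂μ, ‖ℓ x‖ ≤ C + 1 :=
    .of_forall fun x ↦ (norm_smul_fst_sub_snd_le (h x)).trans (by linarith [hC x])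
  have hℓp : ∀ (p : ℝ × ℝ) x, ℓ x p = p.1 * h x - p.2 := fun p x ↦ by simp [ℓ, mul_comm]
  have hint : Integrable h μ := .of_bound hmeas.aestronglyMeasurable C (.of_forall hC)
  have hℓint : ∫ x, ℓ x ∂μ = (∫ x, h x ∂μ) • ContinuousLinearMap.fst ℝ ℝ ℝ -
      ContinuousLinearMap.snd ℝ ℝ ℝ := by
    simp [ℓ, integral_sub (hint.smul_const _) (integrable_const _), integral_smul_const]
  simp_rw [← hℓp, ← hℓint]
  exact ⟨contDiffAt_integral_comp_apply hℓ hK hr hg,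
    hasFDerivAt_integral_comp_apply_zero hℓ hK hr hg⟩

/-- The implicit-function-theorem step in the proof of Theorem 4 of the paper:
for bounded measurable `h` and `ψ` twice continuously differentiable near `0` with
`ψ'(0) = 1` and `ψ''(0) > 0`, the normalization equation
`∫ ψ'(α·h(ξ) − β) dμ(ξ) = 1` can be solved for `β = β(α)` near `α = 0`, with
`β(0) = 0` and `β'(0) = ∫ h dμ`. -/
theorem normalization_equation_implicit_function
    {Ξ : Type*} [MeasurableSpace Ξ] {μ : Measure Ξ} [IsProbabilityMeasure μ]
    (h : Ξ → ℝ) (hmeas : Measurable h) (hbdd : ∃ C : ℝ, ∀ x, |h x| ≤ C)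
    (ψ : ℝ → ℝ)
    (hsmooth : ∃ s ∈ 𝓝 (0 : ℝ), ContDiffOn ℝ 2 ψ s)
    (hψ' : deriv ψ 0 = 1)
    (hψ'' : 0 < deriv (deriv ψ) 0) :
    ∃ δ > (0 : ℝ), ∃ β : ℝ → ℝ,
      ContDiffOn ℝ 1 β (Set.Ioo (-δ) δ) ∧
      β 0 = 0 ∧
      (∀ α ∈ Set.Ioo (-δ) δ, ∫ x, deriv ψ (α * h x - β α) ∂μ = 1) ∧
      deriv β 0 = ∫ x, h x ∂μ := by
  obtain ⟨C, hC⟩ := hbdd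
  obtain ⟨s, hs, hψs⟩ := hsmooth
  obtain ⟨r, hr, hrs⟩ := Metric.mem_nhds_iff.1 hs
  have hg : ContDiffOn ℝ 1 (deriv ψ) (ball 0 r) :=
    (hψs.mono hrs).deriv_of_isOpen isOpen_ball (by norm_num)
  obtain ⟨hF, hF'⟩ := contDiffAt_and_hasFDerivAt_integral_comp_mul_sub (μ := μ) hmeas hC hr hg
  obtain ⟨β, hβ0, hβ', hβ⟩ := hF.exists_implicitFunction (by simp [hF'.fderiv, hψ''.ne'])
  simp only [Prod.fst_zero, Prod.snd_zero] at hβ0 hβ' hβ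
  obtain ⟨δ, hδ, hδβ⟩ := Metric.eventually_nhds_iff_ball.1 hβ
  have hIoo : Set.Ioo (-δ) δ = ball 0 δ := by simp [Real.ball_eq_Ioo]
  refine ⟨δ, hδ, β, fun α hα ↦ (hδβ α (hIoo ▸ hα)).1.contDiffWithinAt, hβ0, fun α hα ↦ ?_, ?_⟩
  · simpa [hψ'] using (hδβ α (hIoo ▸ hα)).2
  · simp [hβ', hF'.fderiv, hψ''.ne']
end

section
/- Let m ≥ 1, let p_1, …, p_m > 0 with Σ_i p_i = 1, and let h_1, …, h_m ∈ ℝ be not all equal, with mean μ = Σ_i p_i·h_i and variance σ² = Σ_i p_i·(h_i − μ)² > 0. Let φ : [0, ∞) → [0, ∞) be convex with φ(1) = 0, twice continuously differentiable in a neighborhood of 1 with φ''(1) > 0. Define v(λ) = sup { Σ_i p_i·h_i·L_i : L_i ≥ 0, Σ_i p_i·L_i = 1, Σ_i p_i·φ(L_i) ≤ λ } for λ > 0. Then v(λ) = μ + √(2·λ·σ²/φ''(1)) + o(√λ) as λ → 0⁺. -/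
open Filter Asymptotics
open scoped Topology BigOperators

/-- The worst-case expectation `v(λ)` over a φ-divergence ball of radius `λ`
around a finitely supported baseline distribution `p`. -/
noncomputable def worstCaseExpectation {m : ℕ} (p h : Fin m → ℝ) (φ : ℝ → ℝ)
    (lam : ℝ) : ℝ :=
  sSup {r : ℝ | ∃ L : Fin m → ℝ, (∀ i, 0 ≤ L i) ∧ (∑ i, p i * L i = 1) ∧
    (∑ i, p i * φ (L i) ≤ lam) ∧ r = ∑ i, p i * h i * L i}

/-!
Write `L = 1 + x`. Since `∑ pᵢ xᵢ = 0`, the objective is `μ + ∑ pᵢ (hᵢ - μ) xᵢ`, while the budget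
`∑ pᵢ φ(1 + xᵢ)` behaves like `φ''(1)/2 · ∑ pᵢ xᵢ²` for small `x`.

For `b > φ''(1)` the perturbation `xᵢ = t (hᵢ - μ)` with `b t² σ² / 2 = λ` is feasible once `λ` is
small and gives `v(λ) ≥ μ + √(2λσ²/b)`. For `0 < a < φ''(1)` we have `φ(1 + x) ≥ a x² / 2` near `0`
and, by convexity, linear growth of `φ(1 + x)` away from `0`; this yields the Fenchel–Young type
bound `y x ≤ θ φ(1 + x) + y² / (2θa)` for all large `θ`, and `θ ≍ λ^(-1/2)` gives
`v(λ) ≤ μ + √(2λσ²/a)`. Letting `a` and `b` tend to `φ''(1)` gives the expansion.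
-/

open Set

theorem isLittleO_sub_taylor_two {f : ℝ → ℝ} {x₀ : ℝ} (hf : ∃ s ∈ 𝓝 x₀, ContDiffOn ℝ 2 f s) :
    (fun x => f x - (f x₀ + deriv f x₀ * (x - x₀) + deriv (deriv f) x₀ / 2 * (x - x₀) ^ 2))
      =o[𝓝 x₀] fun x => (x - x₀) ^ 2 := by
  obtain ⟨s, hs, hfs⟩ := hf
  obtain ⟨r, hr, hball⟩ := Metric.mem_nhds_iff.1 hs
  have htaylor := taylor_isLittleO (convex_ball x₀ r) (Metric.mem_ball_self hr) (hfs.mono hball)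
  rw [Metric.isOpen_ball.nhdsWithin_eq (Metric.mem_ball_self hr)] at htaylor
  refine htaylor.congr_left fun x => ?_
  have hderiv : ∀ n, iteratedDerivWithin n f (Metric.ball x₀ r) x₀ = iteratedDeriv n f x₀ :=
    fun n => iteratedDerivWithin_of_isOpen Metric.isOpen_ball (Metric.mem_ball_self hr)
  simp only [taylor_within_apply, Finset.sum_range_succ, Finset.sum_range_zero, hderiv,
    iteratedDeriv_succ, iteratedDeriv_zero, smul_eq_mul, Nat.factorial, Nat.cast_one,
    Nat.succ_eq_add_one, zero_add, mul_one]
  ring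

theorem Asymptotics.IsLittleO.eventually_mul_le {α : Type*} {l : Filter α} {f u : α → ℝ}
    {a c : ℝ} (h : (fun x => f x - c * u x) =o[l] u) (hu : ∀ x, 0 ≤ u x) (ha : a < c) :
    ∀ᶠ x in l, a * u x ≤ f x := by
  filter_upwards [h.bound (sub_pos.2 ha)] with x hx
  rw [Real.norm_eq_abs, Real.norm_eq_abs, abs_of_nonneg (hu x)] at hx
  linarith [(abs_le.1 hx).1]

theorem Asymptotics.IsLittleO.eventually_le_mul {α : Type*} {l : Filter α} {f u : α → ℝ}
    {b c : ℝ} (h : (fun x => f x - c * u x) =o[l] u) (hu : ∀ x, 0 ≤ u x) (hb : c < b) :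
    ∀ᶠ x in l, f x ≤ b * u x := by
  filter_upwards [h.bound (sub_pos.2 hb)] with x hx
  rw [Real.norm_eq_abs, Real.norm_eq_abs, abs_of_nonneg (hu x)] at hx
  linarith [(abs_le.1 hx).2]

theorem isLittleO_sub_mul_of_eventually_sandwich {α : Type*} {l : Filter α} {f g : α → ℝ}
    {s : ℝ → ℝ} {c : ℝ} (hg : ∀ x, 0 ≤ g x) (hs : ContinuousAt s c)
    (hlower : ∀ᶠ b in 𝓝[>] c, ∀ᶠ x in l, s b * g x ≤ f x)
    (hupper : ∀ᶠ a in 𝓝[<] c, ∀ᶠ x in l, f x ≤ s a * g x) :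
    (fun x => f x - s c * g x) =o[l] g := by
  rw [isLittleO_iff]
  intro ε hε
  have hnear : ∀ᶠ t in 𝓝 c, |s t - s c| ≤ ε :=
    hs.eventually (Metric.closedBall_mem_nhds (s c) hε)
  obtain ⟨b, hb, hfb⟩ := ((hnear.filter_mono nhdsWithin_le_nhds).and hlower).exists
  obtain ⟨a, ha, hfa⟩ := ((hnear.filter_mono nhdsWithin_le_nhds).and hupper).exists
  filter_upwards [hfb, hfa] with x hbx hax
  rw [Real.norm_eq_abs, Real.norm_eq_abs, abs_of_nonneg (hg x), abs_le]
  have hb' := mul_le_mul_of_nonneg_right (abs_le.1 hb).1 (hg x)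
  have ha' := mul_le_mul_of_nonneg_right (abs_le.1 ha).2 (hg x)
  constructor <;> linarith

theorem ConvexOn.mul_le_apply_add_mul {s : Set ℝ} {f : ℝ → ℝ} (hf : ConvexOn ℝ s f)
    {x₀ d t : ℝ} (hx₀ : x₀ ∈ s) (hfx₀ : f x₀ = 0) (hs : x₀ + t * d ∈ s) (ht : 1 ≤ t) :
    t * f (x₀ + d) ≤ f (x₀ + t * d) := by
  have ht₀ : 0 < t := by linarith
  have hcomb := hf.2 hx₀ hs (sub_nonneg.2 (inv_le_one_of_one_le₀ ht)) (inv_nonneg.2 ht₀.le)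
    (sub_add_cancel 1 t⁻¹)
  have hpoint : (1 - t⁻¹) • x₀ + t⁻¹ • (x₀ + t * d) = x₀ + d := by
    simp only [smul_eq_mul]
    field_simp
    ring
  rw [hpoint, hfx₀, smul_zero, zero_add, smul_eq_mul] at hcomb
  calc t * f (x₀ + d) ≤ t * (t⁻¹ * f (x₀ + t * d)) := by gcongr
    _ = f (x₀ + t * d) := by field_simp

theorem mul_abs_sub_one_le_of_convexOn {φ : ℝ → ℝ} (hconv : ConvexOn ℝ (Ici 0) φ)
    (hone : φ 1 = 0) {a δ L : ℝ} (hδ : 0 < δ)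
    (hquad : ∀ L, |L - 1| ≤ δ → a / 2 * (L - 1) ^ 2 ≤ φ L) (hL : 0 ≤ L)
    (hfar : δ ≤ |L - 1|) :
    a * δ / 2 * |L - 1| ≤ φ L := by
  set t := |L - 1| / δ
  have ht : 1 ≤ t := (one_le_div hδ).2 hfar
  have ht₀ : 0 < t := by linarith
  have htδ : t * δ = |L - 1| := div_mul_cancel₀ _ hδ.ne'
  have hL' : 1 + t * ((L - 1) / t) = L := by field_simp; ring
  have hconvex := hconv.mul_le_apply_add_mul (mem_Ici.2 zero_le_one) hone
    (hL'.symm ▸ mem_Ici.2 hL) ht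
  rw [hL'] at hconvex
  have hd : |1 + (L - 1) / t - 1| = δ := by
    rw [add_sub_cancel_left, abs_div, abs_of_pos ht₀, ← htδ]
    field_simp
  calc a * δ / 2 * |L - 1| = t * (a / 2 * (1 + (L - 1) / t - 1) ^ 2) := by
        rw [← sq_abs (1 + (L - 1) / t - 1), hd, ← htδ]
        field_simp
    _ ≤ t * φ (1 + (L - 1) / t) := by gcongr; exact hquad _ hd.le
    _ ≤ φ L := hconvex

theorem mul_sub_one_le_of_convexOn {φ : ℝ → ℝ} (hconv : ConvexOn ℝ (Ici 0) φ)
    (hone : φ 1 = 0) {a δ θ M y L : ℝ} (ha : 0 < a) (hδ : 0 < δ)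
    (hquad : ∀ L, |L - 1| ≤ δ → a / 2 * (L - 1) ^ 2 ≤ φ L) (hθ : 0 < θ)
    (hM : M ≤ θ * (a * δ / 2)) (hy : |y| ≤ M) (hL : 0 ≤ L) :
    y * (L - 1) ≤ θ * φ L + y ^ 2 / (2 * θ * a) := by
  rcases le_or_gt |L - 1| δ with hnear | hfar
  · have hamgm : θ * (a / 2 * (L - 1) ^ 2) + y ^ 2 / (2 * θ * a) - y * (L - 1)
        = (θ * a * (L - 1) - y) ^ 2 / (2 * θ * a) := by
      field_simp
      ring
    have hsq : 0 ≤ (θ * a * (L - 1) - y) ^ 2 / (2 * θ * a) := by positivity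
    have := mul_le_mul_of_nonneg_left (hquad L hnear) hθ.le
    linarith
  · calc y * (L - 1) ≤ |y| * |L - 1| := by rw [← abs_mul]; exact le_abs_self _
      _ ≤ θ * (a * δ / 2) * |L - 1| := by gcongr; exact hy.trans hM
      _ ≤ θ * φ L := by
          rw [mul_assoc]
          gcongr
          exact mul_abs_sub_one_le_of_convexOn hconv hone hδ hquad hL hfar.le
      _ ≤ θ * φ L + y ^ 2 / (2 * θ * a) := le_add_of_nonneg_right (by positivity)

section WorstCase

variable {m : ℕ} {p h : Fin m → ℝ} {φ : ℝ → ℝ} {lam : ℝ}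

theorem sum_mul_sub_mean_eq_zero (hp1 : ∑ i, p i = 1) :
    ∑ i, p i * (h i - ∑ j, p j * h j) = 0 := by
  simp only [mul_sub, Finset.sum_sub_distrib, ← Finset.sum_mul, hp1, one_mul, sub_self]

theorem sum_mul_mul_eq_mean_add (hp1 : ∑ i, p i = 1) {L : Fin m → ℝ}
    (hL1 : ∑ i, p i * L i = 1) :
    ∑ i, p i * h i * L i
      = ∑ i, p i * h i + ∑ i, p i * ((h i - ∑ j, p j * h j) * (L i - 1)) := by
  set μ := ∑ j, p j * h j
  calc ∑ i, p i * h i * L i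
        = ∑ i, (p i * h i + p i * ((h i - μ) * (L i - 1)) + μ * (p i * L i - p i)) :=
        Finset.sum_congr rfl fun i _ => by ring
    _ = μ + ∑ i, p i * ((h i - μ) * (L i - 1)) := by
        rw [Finset.sum_add_distrib, Finset.sum_add_distrib, ← Finset.mul_sum,
          Finset.sum_sub_distrib, hL1, hp1, sub_self, mul_zero, add_zero]

theorem sum_mul_sub_sq_pos (hp : ∀ i, 0 < p i) (hne : ∃ i j, h i ≠ h j) (μ : ℝ) :
    0 < ∑ i, p i * (h i - μ) ^ 2 := by
  obtain ⟨i, j, hij⟩ := hne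
  have hk : ∃ k, h k ≠ μ := by
    by_contra! hall
    exact hij ((hall i).trans (hall j).symm)
  obtain ⟨k, hk⟩ := hk
  exact Finset.sum_pos' (fun i _ => mul_nonneg (hp i).le (sq_nonneg _))
    ⟨k, Finset.mem_univ k, mul_pos (hp k) (pow_two_pos_of_ne_zero (sub_ne_zero.2 hk))⟩

theorem le_worstCaseExpectation (hp : ∀ i, 0 ≤ p i) {L : Fin m → ℝ} (hL0 : ∀ i, 0 ≤ L i)
    (hL1 : ∑ i, p i * L i = 1) (hLφ : ∑ i, p i * φ (L i) ≤ lam) :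
    ∑ i, p i * h i * L i ≤ worstCaseExpectation p h φ lam := by
  refine le_csSup ?_ ⟨L, hL0, hL1, hLφ, rfl⟩
  obtain ⟨M, hM⟩ := Finite.exists_le h
  refine ⟨M, ?_⟩
  rintro r ⟨L', hL'0, hL'1, -, rfl⟩
  calc ∑ i, p i * h i * L' i ≤ ∑ i, p i * M * L' i := by
        gcongr with i
        exacts [hL'0 i, hp i, hM i]
    _ = M := by simp only [mul_comm (p _) M, mul_assoc, ← Finset.mul_sum, hL'1, mul_one]

theorem worstCaseExpectation_le (hp1 : ∑ i, p i = 1) (hone : φ 1 = 0) (hlam : 0 ≤ lam)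
    {B : ℝ} (hB : ∀ L : Fin m → ℝ, (∀ i, 0 ≤ L i) → ∑ i, p i * L i = 1 →
      ∑ i, p i * φ (L i) ≤ lam → ∑ i, p i * h i * L i ≤ B) :
    worstCaseExpectation p h φ lam ≤ B := by
  refine csSup_le ⟨_, fun _ => 1, fun _ => zero_le_one, ?_, ?_, rfl⟩ ?_
  · simpa using hp1
  · simpa [hone] using hlam
  · rintro r ⟨L, hL0, hL1, hLφ, rfl⟩
    exact hB L hL0 hL1 hLφ

theorem eventually_worstCaseExpectation_le (hp : ∀ i, 0 ≤ p i) (hp1 : ∑ i, p i = 1)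
    (hconv : ConvexOn ℝ (Ici 0) φ) (hone : φ 1 = 0)
    (hV : 0 < ∑ i, p i * (h i - ∑ j, p j * h j) ^ 2) {a : ℝ} (ha : 0 < a)
    (hquad : ∀ᶠ L in 𝓝 1, a / 2 * (L - 1) ^ 2 ≤ φ L) :
    ∀ᶠ lam in 𝓝[>] 0, worstCaseExpectation p h φ lam
      ≤ ∑ i, p i * h i + √(2 * (∑ i, p i * (h i - ∑ j, p j * h j) ^ 2) / a) * √lam := by
  set μ := ∑ j, p j * h j
  set V := ∑ i, p i * (h i - μ) ^ 2
  obtain ⟨δ, hδ, hquadδ⟩ := Metric.nhds_basis_closedBall.eventually_iff.1 hquad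
  replace hquadδ : ∀ L, |L - 1| ≤ δ → a / 2 * (L - 1) ^ 2 ≤ φ L := fun L hL =>
    hquadδ (by rwa [Metric.mem_closedBall, Real.dist_eq])
  obtain ⟨M, hM⟩ := Finite.exists_le fun i => |h i - μ|
  set r := √(2 * V / a)
  have hr : 0 < r := Real.sqrt_pos.2 (by positivity)
  have hr2 : r ^ 2 = 2 * V / a := Real.sq_sqrt (by positivity)
  have hsmall : ∀ᶠ lam in 𝓝[>] 0, M * (4 * √lam) < r * (a * δ) := by
    have hlim : Tendsto (fun lam => M * (4 * √lam)) (𝓝[>] 0) (𝓝 0) := by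
      simpa using ((Real.continuous_sqrt.tendsto 0).const_mul 4 |>.const_mul M).mono_left
        nhdsWithin_le_nhds
    exact hlim.eventually_lt_const (by positivity)
  filter_upwards [hsmall, self_mem_nhdsWithin] with lam hlamM hlam
  have hs : 0 < √lam := Real.sqrt_pos.2 hlam
  have hs2 : √lam ^ 2 = lam := Real.sq_sqrt (le_of_lt hlam)
  -- `θ = √(σ² / (2aλ))` minimises `θ λ + σ² / (2θa)`, the minimum being `√(2λσ²/a)`.
  set θ := r / (2 * √lam)
  have hθ : 0 < θ := by positivity
  have hθM : M ≤ θ * (a * δ / 2) := by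
    rw [div_mul_eq_mul_div, le_div_iff₀ (by positivity)]
    linarith
  refine worstCaseExpectation_le hp1 hone (le_of_lt hlam) fun L hL0 hL1 hLφ => ?_
  calc ∑ i, p i * h i * L i = μ + ∑ i, p i * ((h i - μ) * (L i - 1)) :=
        sum_mul_mul_eq_mean_add hp1 hL1
    _ ≤ μ + ∑ i, p i * (θ * φ (L i) + (h i - μ) ^ 2 / (2 * θ * a)) := by
        gcongr with i
        · exact hp i
        · exact mul_sub_one_le_of_convexOn hconv hone ha hδ hquadδ hθ hθM (hM i) (hL0 i)
    _ = μ + θ * ∑ i, p i * φ (L i) + V / (2 * θ * a) := by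
        have hterm : ∀ i, p i * (θ * φ (L i) + (h i - μ) ^ 2 / (2 * θ * a))
            = θ * (p i * φ (L i)) + p i * (h i - μ) ^ 2 / (2 * θ * a) := fun i => by ring
        simp only [hterm, Finset.sum_add_distrib, ← Finset.mul_sum, ← Finset.sum_div]
        ring
    _ ≤ μ + θ * lam + V / (2 * θ * a) := by gcongr
    _ = μ + r * √lam := by
        have hVr : V = r ^ 2 * a / 2 := by rw [hr2]; field_simp
        have hθlam : θ * lam = r * √lam / 2 := by
          simp only [θ]
          field_simp
          exact hs2.symm
        have hθV : V / (2 * θ * a) = r * √lam / 2 := by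
          simp only [θ, hVr]
          field_simp
        rw [hθlam, hθV]
        ring

theorem eventually_le_worstCaseExpectation (hp : ∀ i, 0 ≤ p i) (hp1 : ∑ i, p i = 1)
    (hV : 0 < ∑ i, p i * (h i - ∑ j, p j * h j) ^ 2) {b : ℝ} (hb : 0 < b)
    (hquad : ∀ᶠ L in 𝓝 1, φ L ≤ b / 2 * (L - 1) ^ 2) :
    ∀ᶠ lam in 𝓝[>] 0, ∑ i, p i * h i
      + √(2 * (∑ i, p i * (h i - ∑ j, p j * h j) ^ 2) / b) * √lam
      ≤ worstCaseExpectation p h φ lam := by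
  set μ := ∑ j, p j * h j
  set V := ∑ i, p i * (h i - μ) ^ 2
  have hμ0 : ∑ i, p i * (h i - μ) = 0 := sum_mul_sub_mean_eq_zero hp1
  set r := √(2 * V / b)
  have hr2 : r ^ 2 = 2 * V / b := Real.sq_sqrt (by positivity)
  -- `t` is chosen so that `b t² σ² / 2 = λ`.
  set t : ℝ → ℝ := fun lam => r * √lam / V
  have hL : ∀ i, Tendsto (fun lam => 1 + t lam * (h i - μ)) (𝓝[>] 0) (𝓝 1) := by
    intro i
    have hcont : Continuous fun lam => 1 + t lam * (h i - μ) := by fun_prop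
    simpa [t] using (hcont.tendsto 0).mono_left nhdsWithin_le_nhds
  have hfeasible : ∀ᶠ lam in 𝓝[>] 0, ∀ i, 0 ≤ 1 + t lam * (h i - μ) ∧
      φ (1 + t lam * (h i - μ)) ≤ b / 2 * (1 + t lam * (h i - μ) - 1) ^ 2 :=
    eventually_all.2 fun i => (hL i).eventually ((eventually_ge_nhds one_pos).and hquad)
  filter_upwards [hfeasible, self_mem_nhdsWithin] with lam hLlam hlam
  have hsum : ∑ i, p i * (1 + t lam * (h i - μ)) = 1 := by
    simp only [mul_add, mul_one, Finset.sum_add_distrib, hp1, mul_left_comm (p _) (t lam),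
      ← Finset.mul_sum, hμ0, mul_zero, add_zero]
  have hbudget : ∑ i, p i * φ (1 + t lam * (h i - μ)) ≤ lam :=
    calc ∑ i, p i * φ (1 + t lam * (h i - μ))
        ≤ ∑ i, p i * (b / 2 * (1 + t lam * (h i - μ) - 1) ^ 2) := by
          gcongr with i
          exacts [hp i, (hLlam i).2]
      _ = b / 2 * t lam ^ 2 * V := by
          simp only [add_sub_cancel_left, Finset.mul_sum, V]
          exact Finset.sum_congr rfl fun i _ => by ring
      _ = lam := by
          simp only [t]
          rw [div_pow, mul_pow, hr2, Real.sq_sqrt (le_of_lt hlam)]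
          field_simp
  have hvalue := le_worstCaseExpectation (h := h) hp (fun i => (hLlam i).1) hsum hbudget
  rw [sum_mul_mul_eq_mean_add hp1 hsum] at hvalue
  convert hvalue using 2
  calc r * √lam = t lam * V := by simp only [t]; field_simp
    _ = _ := by
      simp only [V, Finset.mul_sum, add_sub_cancel_left]
      exact Finset.sum_congr rfl fun i _ => by ring

end WorstCase

theorem worst_case_expectation_expansion_general
    {m : ℕ}
    (p : Fin m → ℝ) (hp : ∀ i, 0 < p i) (hp1 : ∑ i, p i = 1)
    (h : Fin m → ℝ) (hne : ∃ i j, h i ≠ h j)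
    (φ : ℝ → ℝ)
    (hconv : ConvexOn ℝ (Set.Ici (0 : ℝ)) φ)
    (hnonneg : ∀ t, 0 ≤ t → 0 ≤ φ t)
    (hone : φ 1 = 0)
    (hsmooth : ∃ s ∈ 𝓝 (1 : ℝ), ContDiffOn ℝ 2 φ s)
    (hsecond : 0 < deriv (deriv φ) 1) :
    (fun lam => worstCaseExpectation p h φ lam - (∑ i, p i * h i)
        - Real.sqrt (2 * lam * (∑ i, p i * (h i - ∑ j, p j * h j) ^ 2)
            / deriv (deriv φ) 1))
      =o[𝓝[>] (0 : ℝ)] fun lam => Real.sqrt lam := by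
  set c := deriv (deriv φ) 1
  set V := ∑ i, p i * (h i - ∑ j, p j * h j) ^ 2
  have hV : 0 < V := sum_mul_sub_sq_pos hp hne _
  have hmin : IsLocalMin φ 1 := by
    filter_upwards [eventually_ge_nhds one_pos] with L hL
    exact hone ▸ hnonneg L hL
  have htaylor : (fun L => φ L - c / 2 * (L - 1) ^ 2) =o[𝓝 1] fun L => (L - 1) ^ 2 := by
    simpa [hone, hmin.deriv_eq_zero] using isLittleO_sub_taylor_two hsmooth
  have hsplit : ∀ lam, √(2 * lam * V / c) = √(2 * V / c) * √lam := fun lam => by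
    rw [← Real.sqrt_mul (by positivity)]
    ring_nf
  simp only [hsplit]
  refine isLittleO_sub_mul_of_eventually_sandwich (s := fun t => √(2 * V / t))
    (fun _ => Real.sqrt_nonneg _)
    (Real.continuous_sqrt.continuousAt.comp (continuousAt_const.div continuousAt_id hsecond.ne'))
    ?_ ?_
  · filter_upwards [self_mem_nhdsWithin] with b (hb : c < b)
    have hquad := htaylor.eventually_le_mul (fun L => sq_nonneg _)
      (div_lt_div_of_pos_right hb two_pos)
    filter_upwards [eventually_le_worstCaseExpectation (fun i => (hp i).le) hp1 hV
      (hsecond.trans hb) hquad] with lam hlam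
    linarith
  · filter_upwards [Ioo_mem_nhdsLT hsecond] with a ha
    have hquad := htaylor.eventually_mul_le (fun L => sq_nonneg _)
      (div_lt_div_of_pos_right ha.2 two_pos)
    filter_upwards [eventually_worstCaseExpectation_le (fun i => (hp i).le) hp1 hconv hone hV
      ha.1 hquad] with lam hlam
    linarith

/-- The first-order expansion of the worst-case expectation over a φ-divergence ball
(equation (18) of the paper) for a finitely supported baseline distribution:
`v(λ) = μ + √(2·λ·σ²/φ''(1)) + o(√λ)` as `λ → 0⁺`, where `μ` and `σ² > 0` are the
baseline mean and variance of `h`. -/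
theorem worst_case_expectation_expansion
    {m : ℕ} (hm : 1 ≤ m)
    (p : Fin m → ℝ) (hp : ∀ i, 0 < p i) (hp1 : ∑ i, p i = 1)
    (h : Fin m → ℝ) (hne : ∃ i j, h i ≠ h j)
    (φ : ℝ → ℝ)
    (hconv : ConvexOn ℝ (Set.Ici (0 : ℝ)) φ)
    (hnonneg : ∀ t, 0 ≤ t → 0 ≤ φ t)
    (hone : φ 1 = 0)
    (hsmooth : ∃ s ∈ 𝓝 (1 : ℝ), ContDiffOn ℝ 2 φ s)
    (hsecond : 0 < deriv (deriv φ) 1) :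
    (fun lam => worstCaseExpectation p h φ lam - (∑ i, p i * h i)
        - Real.sqrt (2 * lam * (∑ i, p i * (h i - ∑ j, p j * h j) ^ 2)
            / deriv (deriv φ) 1))
      =o[𝓝[>] (0 : ℝ)] fun lam => Real.sqrt lam :=
  worst_case_expectation_expansion_general p hp hp1 h hne φ hconv hnonneg hone hsmooth hsecond
end

section
/- Let J be a positive semidefinite m×m matrix, let θ* ∈ ℝ^m, let t_n ∈ ℝ^m with t_n → θ*, and let ν_n be probability measures on ℝ^m such that the total variation distance between ν_n and the Gaussian measure N(t_n, J/n) tends to 0 and such that the pushforward laws of the map θ ↦ √n·(θ − t_n) under ν_n form a uniformly integrable family. Let g : ℝ^m → ℝ^d be continuously differentiable with g and its Jacobian Dg bounded and Dg continuous. Then √n·( ∫ g(θ) dν_n(θ) − g(t_n) ) → 0 as n → ∞. -/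
open MeasureTheory ProbabilityTheory Filter
open scoped Topology BigOperators

open Set

/-!
Write `X_n = √n • (θ - t_n)` and `L = Dg(θ*)`. Then
`√n • (∫ g dν_n - g t_n) = ∫ (√n • (g θ - g t_n) - L X_n) dν_n + L (∫ X_n dν_n)`.
By the mean value inequality the remainder is at most `η ‖X_n‖` where `‖X_n‖ < C` (there `θ` is
close to `θ*` and `‖Dg - L‖ ≤ η` by continuity of `Dg`), and at most `2 sup ‖Dg‖ ‖X_n‖` on the
tail `‖X_n‖ ≥ C`, which uniform integrability makes small.
The mean `∫ X_n dν_n` tends to `0` because every projection `⟨v, X_n⟩` has the same centred law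
`N(0, vᵀJv)` under `γ_n` for all `n`: truncated at a level `C`, its mean transfers from `γ_n` to
`ν_n` by total variation merging, and the truncation errors under both measures are controlled by
uniform integrability.
-/

section UniformIntegrability

variable {α : Type*} [MeasurableSpace α]

/-- Uniform integrability, for large `n`, of the laws of the nonnegative variables `X n`
under `μ n`. -/
def AsympUnifIntegrable (X : ℕ → α → ℝ) (μ : ℕ → Measure α) : Prop :=
  (∀ᶠ n in atTop, Integrable (X n) (μ n)) ∧
    ∀ ε, 0 < ε → ∀ᶠ C in atTop, ∀ᶠ n in atTop, ∫ a in {a | C ≤ X n a}, X n a ∂μ n ≤ ε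

lemma setIntegral_tail_anti {μ : Measure α} {X : α → ℝ} (hX : Integrable X μ) (h0 : ∀ a, 0 ≤ X a)
    {C C' : ℝ} (hC : C ≤ C') :
    ∫ a in {a | C' ≤ X a}, X a ∂μ ≤ ∫ a in {a | C ≤ X a}, X a ∂μ :=
  setIntegral_mono_set hX.integrableOn (.of_forall fun a => h0 a)
    (.of_forall fun _ ha => hC.trans ha)

lemma asympUnifIntegrable_of_forall {X : ℕ → α → ℝ} {μ : ℕ → Measure α}
    (h0 : ∀ n a, 0 ≤ X n a) (hint : ∀ n, Integrable (X n) (μ n))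
    (htail : ∀ ε, 0 < ε → ∃ C, ∀ n, ∫ a in {a | C ≤ X n a}, X n a ∂μ n ≤ ε) :
    AsympUnifIntegrable X μ := by
  refine ⟨.of_forall hint, fun ε hε => ?_⟩
  obtain ⟨C, hC⟩ := htail ε hε
  filter_upwards [eventually_ge_atTop C] with C' hC'
  exact .of_forall fun n => (setIntegral_tail_anti (hint n) (h0 n) hC').trans (hC n)

lemma AsympUnifIntegrable.mono {X Y : ℕ → α → ℝ} {μ : ℕ → Measure α}
    (hX : AsympUnifIntegrable X μ) (hY : ∀ n, AEStronglyMeasurable (Y n) (μ n))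
    (h0 : ∀ n a, 0 ≤ Y n a) (hle : ∀ n a, Y n a ≤ X n a) : AsympUnifIntegrable Y μ := by
  have hYint : ∀ᶠ n in atTop, Integrable (Y n) (μ n) := hX.1.mono fun n hn =>
    hn.mono' (hY n) (.of_forall fun a => by rw [Real.norm_of_nonneg (h0 n a)]; exact hle n a)
  refine ⟨hYint, fun ε hε => (hX.2 ε hε).mono fun C hC => ?_⟩
  filter_upwards [hC, hX.1, hYint] with n hn hXn hYn
  calc ∫ a in {a | C ≤ Y n a}, Y n a ∂μ n
      ≤ ∫ a in {a | C ≤ Y n a}, X n a ∂μ n :=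
        setIntegral_mono hYn.integrableOn hXn.integrableOn (hle n)
    _ ≤ ∫ a in {a | C ≤ X n a}, X n a ∂μ n :=
        setIntegral_mono_set hXn.integrableOn (.of_forall fun a => (h0 n a).trans (hle n a))
          (.of_forall fun a ha => le_trans ha (hle n a))
    _ ≤ ε := hn

lemma asympUnifIntegrable_abs_of_map_eq {f : ℕ → α → ℝ} {μ : ℕ → Measure α} {ρ : Measure ℝ}
    (hf : ∀ n, Measurable (f n)) (hρ : Integrable id ρ)
    (hlaw : ∀ᶠ n in atTop, (μ n).map (f n) = ρ) :
    AsympUnifIntegrable (fun n a => |f n a|) μ := by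
  have hset : ∀ C : ℝ, MeasurableSet {x : ℝ | C ≤ |x|} :=
    fun C => measurableSet_le measurable_const measurable_abs
  have htail : Tendsto (fun C => ∫ x in {x : ℝ | C ≤ |x|}, |x| ∂ρ) atTop (𝓝 0) := by
    have hempty : (⋂ C : ℝ, {x : ℝ | C ≤ |x|}) = ∅ :=
      eq_empty_of_forall_notMem fun x hx => absurd (mem_iInter.mp hx (|x| + 1)) (by norm_num)
    simpa [hempty] using tendsto_setIntegral_of_antitone hset
      (fun C C' hCC' x hx => le_trans hCC' hx) ⟨0, hρ.abs.integrableOn⟩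
  refine ⟨hlaw.mono fun n hn => ?_, fun ε hε => ?_⟩
  · rw [← hn] at hρ
    exact (integrable_map_measure aestronglyMeasurable_id (hf n).aemeasurable).mp hρ |>.abs
  · filter_upwards [htail.eventually (eventually_le_nhds hε)] with C hC
    filter_upwards [hlaw] with n hn
    rw [← hn, setIntegral_map (hset C) continuous_abs.aestronglyMeasurable
      (hf n).aemeasurable] at hC
    exact hC

end UniformIntegrability

section TotalVariation

variable {α : Type*} [MeasurableSpace α]

lemma integrableOn_measureReal_le_Ioc (κ : Measure α) [IsFiniteMeasure κ] (f : α → ℝ) (B : ℝ) :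
    IntegrableOn (fun t => κ.real {a | t ≤ f a}) (Ioc 0 B) := by
  have hanti : Antitone fun t => κ.real {a | t ≤ f a} := fun _ _ hst =>
    measureReal_mono fun _ ha => hst.trans ha
  exact (hanti.antitoneOn _).integrableOn_isCompact isCompact_Icc |>.mono_set Ioc_subset_Icc_self

lemma abs_integral_sub_le_of_tv_of_nonneg {μ ν : Measure α} [IsFiniteMeasure μ]
    [IsFiniteMeasure ν] {f : α → ℝ} {B δ : ℝ} (hf : Measurable f) (h0 : ∀ a, 0 ≤ f a)
    (hB : ∀ a, f a ≤ B) (hB0 : 0 ≤ B)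
    (hTV : ∀ s, MeasurableSet s → |(μ s).toReal - (ν s).toReal| ≤ δ) :
    |∫ a, f a ∂μ - ∫ a, f a ∂ν| ≤ B * δ := by
  have hint : ∀ (κ : Measure α) [IsFiniteMeasure κ], Integrable f κ := fun κ _ =>
    (integrable_const B).mono' hf.aestronglyMeasurable
      (.of_forall fun a => by rw [Real.norm_of_nonneg (h0 a)]; exact hB a)
  rw [(hint μ).integral_eq_integral_Ioc_meas_le (.of_forall h0) (.of_forall hB),
    (hint ν).integral_eq_integral_Ioc_meas_le (.of_forall h0) (.of_forall hB),
    ← integral_sub (integrableOn_measureReal_le_Ioc μ f B) (integrableOn_measureReal_le_Ioc ν f B),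
    ← Real.norm_eq_abs]
  calc _ ≤ δ * volume.real (Ioc (0 : ℝ) B) :=
        norm_setIntegral_le_of_norm_le_const measure_Ioc_lt_top fun t _ =>
          hTV _ (measurableSet_le measurable_const hf)
    _ ≤ B * δ := by
        rw [Real.volume_real_Ioc_of_le hB0, sub_zero, mul_comm]

lemma abs_integral_sub_le_of_tv_of_abs_le {μ ν : Measure α} [IsProbabilityMeasure μ]
    [IsProbabilityMeasure ν] {f : α → ℝ} {B δ : ℝ} (hf : Measurable f) (hB : ∀ a, |f a| ≤ B)
    (hB0 : 0 ≤ B)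
    (hTV : ∀ s, MeasurableSet s → |(μ s).toReal - (ν s).toReal| ≤ δ) :
    |∫ a, f a ∂μ - ∫ a, f a ∂ν| ≤ 2 * B * δ := by
  have hint : ∀ (κ : Measure α) [IsProbabilityMeasure κ], ∫ a, (f a + B) ∂κ = ∫ a, f a ∂κ + B :=
    fun κ _ => by
      rw [integral_add ((integrable_const B).mono' hf.aestronglyMeasurable (.of_forall hB))
        (integrable_const B), integral_const, probReal_univ, one_smul]
  have := abs_integral_sub_le_of_tv_of_nonneg (μ := μ) (ν := ν) (B := 2 * B) (hf.add_const B)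
    (fun a => by linarith [neg_abs_le (f a), hB a]) (fun a => by linarith [le_abs_self (f a), hB a])
    (by linarith) hTV
  rwa [hint μ, hint ν, add_sub_add_right_eq_sub] at this

lemma abs_sub_clip_le {C x : ℝ} (hC : 0 ≤ C) :
    |x - max (-C) (min C x)| ≤ if C ≤ |x| then |x| else 0 := by
  split_ifs with h
  · rcases le_total 0 x with hx | hx
    · rw [abs_of_nonneg hx] at h ⊢
      rw [min_eq_left h, max_eq_right (by linarith), abs_of_nonneg (by linarith)]
      linarith
    · rw [abs_of_nonpos hx] at h ⊢
      rw [min_eq_right (by linarith), max_eq_left (by linarith), abs_of_nonpos (by linarith)]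
      linarith
  · rw [not_le, abs_lt] at h
    rw [min_eq_right h.2.le, max_eq_right h.1.le, sub_self, abs_zero]

lemma abs_clip_le {C x : ℝ} (hC : 0 ≤ C) : |max (-C) (min C x)| ≤ C :=
  abs_le.mpr ⟨le_max_left _ _, max_le (by linarith) (min_le_left _ _)⟩

lemma abs_integral_sub_integral_clip_le {μ : Measure α} [IsFiniteMeasure μ] {f : α → ℝ}
    (hf : Measurable f) (hfi : Integrable f μ) {C : ℝ} (hC : 0 ≤ C) :
    |∫ a, f a ∂μ - ∫ a, max (-C) (min C (f a)) ∂μ| ≤ ∫ a in {a | C ≤ |f a|}, |f a| ∂μ := by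
  have hclip : Integrable (fun a => max (-C) (min C (f a))) μ :=
    (integrable_const C).mono'
      (measurable_const.max (measurable_const.min hf)).aestronglyMeasurable
      (.of_forall fun a => abs_clip_le hC)
  have hset : MeasurableSet {a | C ≤ |f a|} := measurableSet_le measurable_const hf.abs
  rw [← integral_sub hfi hclip, ← integral_indicator hset]
  refine abs_integral_le_integral_abs.trans
    (integral_mono (hfi.sub hclip).abs (hfi.abs.indicator hset) fun a => ?_)
  simpa only [indicator_apply, mem_ofPred_eq] using abs_sub_clip_le hC

lemma tendsto_integral_sub_integral_of_tv {μ ν : ℕ → Measure α} [∀ n, IsProbabilityMeasure (μ n)]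
    [∀ n, IsProbabilityMeasure (ν n)] {f : ℕ → α → ℝ} (hf : ∀ n, Measurable (f n))
    (hTV : ∀ ε : ℝ, 0 < ε → ∀ᶠ n in atTop,
      ∀ s, MeasurableSet s → |(μ n s).toReal - (ν n s).toReal| ≤ ε)
    (hμ : AsympUnifIntegrable (fun n a => |f n a|) μ)
    (hν : AsympUnifIntegrable (fun n a => |f n a|) ν) :
    Tendsto (fun n => ∫ a, f n a ∂μ n - ∫ a, f n a ∂ν n) atTop (𝓝 0) := by
  rw [NormedAddGroup.tendsto_nhds_zero]
  intro ε hε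
  obtain ⟨C, ⟨hCμ, hCν⟩, hC⟩ := (((hμ.2 (ε / 4) (by positivity)).and
    (hν.2 (ε / 4) (by positivity))).and (eventually_ge_atTop 0)).exists
  filter_upwards [hCμ, hCν, hμ.1, hν.1, hTV (ε / (4 * (C + 1))) (by positivity)]
    with n hμtail hνtail hμint hνint hTVn
  have hclip : Measurable fun a => max (-C) (min C (f n a)) :=
    measurable_const.max (measurable_const.min (hf n))
  have hμclip := abs_integral_sub_integral_clip_le (hf n)
    (hμint.mono' (hf n).aestronglyMeasurable (.of_forall fun _ => le_rfl)) hC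
  have hνclip := abs_integral_sub_integral_clip_le (hf n)
    (hνint.mono' (hf n).aestronglyMeasurable (.of_forall fun _ => le_rfl)) hC
  have hTVclip := abs_integral_sub_le_of_tv_of_abs_le hclip (fun _ => abs_clip_le hC) hC hTVn
  have hsmall : 2 * C * (ε / (4 * (C + 1))) < ε / 2 := by
    rw [mul_div_assoc', div_lt_div_iff₀ (by positivity) two_pos]
    nlinarith
  rw [Real.norm_eq_abs]
  have := abs_sub_le (∫ a, f n a ∂μ n) (∫ a, max (-C) (min C (f n a)) ∂μ n) (∫ a, f n a ∂ν n)
  have := abs_sub_le (∫ a, max (-C) (min C (f n a)) ∂μ n)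
    (∫ a, max (-C) (min C (f n a)) ∂ν n) (∫ a, f n a ∂ν n)
  rw [abs_sub_comm] at hνclip
  linarith

end TotalVariation

lemma gaussianReal_map_sqrt_mul_sub {c q : ℝ} {n : ℕ} (hn : n ≠ 0) :
    (gaussianReal c (q / n).toNNReal).map (fun x => √n * (x - c)) = gaussianReal 0 q.toNNReal := by
  have hcomp : (fun x => √n * (x - c)) = (√n * ·) ∘ (· - c) := rfl
  rw [hcomp, ← Measure.map_map (by fun_prop) (by fun_prop), gaussianReal_map_sub_const,
    gaussianReal_map_const_mul, sub_self, mul_zero]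
  congr 1
  ext
  have hn' : (0 : ℝ) < n := by positivity
  simp only [NNReal.coe_mul, NNReal.coe_mk, Real.sq_sqrt hn'.le, Real.coe_toNNReal']
  rw [mul_max_of_nonneg _ _ hn'.le, mul_zero, mul_div_cancel₀ _ hn'.ne']

lemma tendsto_zero_of_forall_inner_tendsto_zero {ι E : Type*} [NormedAddCommGroup E]
    [InnerProductSpace ℝ E] [FiniteDimensional ℝ E] {l : Filter ι} {x : ι → E}
    (h : ∀ v : E, ‖v‖ ≤ 1 → Tendsto (fun i => inner ℝ v (x i)) l (𝓝 0)) :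
    Tendsto x l (𝓝 0) := by
  let b := stdOrthonormalBasis ℝ E
  have hsum := tendsto_finsetSum Finset.univ fun j _ =>
    (h (b j) (b.orthonormal.1 j).le).smul_const (b j)
  simp only [zero_smul, Finset.sum_const_zero, b.sum_repr'] at hsum
  exact hsum

section Gaussian

variable {E : Type*} [NormedAddCommGroup E] [InnerProductSpace ℝ E] [MeasurableSpace E]
  [BorelSpace E]

lemma integrable_smul_sub_of_integrable_mul_norm [SecondCountableTopology E] {μ : Measure E}
    {a : ℝ} {t : E} (ha : 0 ≤ a) (h : Integrable (fun θ => a * ‖θ - t‖) μ) :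
    Integrable (fun θ => a • (θ - t)) μ :=
  h.mono' (by fun_prop : Continuous fun θ => a • (θ - t)).aestronglyMeasurable
    (.of_forall fun θ => by rw [norm_smul, Real.norm_of_nonneg ha])

theorem tendsto_integral_sqrt_smul_sub_of_tv_gaussian [FiniteDimensional ℝ E]
    {t : ℕ → E} {ν γ : ℕ → Measure E} [∀ n, IsProbabilityMeasure (ν n)]
    [∀ n, IsProbabilityMeasure (γ n)] (Q : E → ℝ)
    (hγ : ∀ n v, (γ n).map (fun θ => inner ℝ v θ)
      = gaussianReal (inner ℝ v (t n)) (Q v / n).toNNReal)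
    (hTV : ∀ ε : ℝ, 0 < ε → ∀ᶠ n in atTop,
      ∀ s, MeasurableSet s → |(ν n s).toReal - (γ n s).toReal| ≤ ε)
    (hX : AsympUnifIntegrable (fun n θ => √n * ‖θ - t n‖) ν) :
    Tendsto (fun n => ∫ θ, √n • (θ - t n) ∂ν n) atTop (𝓝 0) := by
  refine tendsto_zero_of_forall_inner_tendsto_zero fun v hv => ?_
  set f : ℕ → E → ℝ := fun n θ => √n * (inner ℝ v θ - inner ℝ v (t n))
  have hf : ∀ n, Measurable (f n) := fun n => by fun_prop
  have hlaw : ∀ n ≠ 0, (γ n).map (f n) = gaussianReal 0 (Q v).toNNReal := fun n hn => by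
    rw [← gaussianReal_map_sqrt_mul_sub hn, ← hγ n v, Measure.map_map (by fun_prop) (by fun_prop)]
    rfl
  have hmean : ∀ n ≠ 0, ∫ θ, f n θ ∂γ n = 0 := fun n hn =>
    calc ∫ θ, f n θ ∂γ n = ∫ x, x ∂(γ n).map (f n) :=
          (integral_map (hf n).aemeasurable aestronglyMeasurable_id).symm
      _ = 0 := by rw [hlaw n hn, integral_id_gaussianReal]
  have hνUI : AsympUnifIntegrable (fun n θ => |f n θ|) ν :=
    hX.mono (fun n => (hf n).abs.aestronglyMeasurable) (fun _ _ => abs_nonneg _) fun n θ => by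
      rw [abs_mul, abs_of_nonneg (Real.sqrt_nonneg _), ← inner_sub_right]
      refine mul_le_mul_of_nonneg_left ?_ (Real.sqrt_nonneg _)
      exact (abs_real_inner_le_norm v _).trans (mul_le_of_le_one_left (norm_nonneg _) hv)
  have hγUI : AsympUnifIntegrable (fun n θ => |f n θ|) γ :=
    asympUnifIntegrable_abs_of_map_eq hf IsGaussian.integrable_id
      ((eventually_ne_atTop 0).mono hlaw)
  refine (tendsto_integral_sub_integral_of_tv hf hTV hνUI hγUI).congr' ?_
  filter_upwards [eventually_ne_atTop 0, hX.1] with n hn hint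
  rw [hmean n hn, sub_zero, ← integral_inner
    (integrable_smul_sub_of_integrable_mul_norm (Real.sqrt_nonneg _) hint)]
  simp only [f, inner_smul_right, inner_sub_right]

end Gaussian

section Remainder

variable {E F : Type*} [NormedAddCommGroup E] [NormedSpace ℝ E] [NormedAddCommGroup F]
  [NormedSpace ℝ F]

lemma norm_smul_sub_sub_fderiv_le {g : E → F} (hg : Differentiable ℝ g) {K η δ a C : ℝ}
    {θs t θ : E} (hK : ∀ x, ‖fderiv ℝ g x‖ ≤ K)
    (hη : ∀ x ∈ Metric.ball θs δ, ‖fderiv ℝ g x - fderiv ℝ g θs‖ ≤ η)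
    (ht : t ∈ Metric.ball θs (δ / 2)) (ha : 0 < a) (hC : 0 ≤ C) (haC : C < a * (δ / 2)) :
    ‖a • (g θ - g t) - fderiv ℝ g θs (a • (θ - t))‖ ≤
      η * C + 2 * K * {θ | C ≤ a * ‖θ - t‖}.indicator (fun θ => a * ‖θ - t‖) θ := by
  set L := fderiv ℝ g θs
  have hδ : 0 < δ := by linarith [Metric.pos_of_mem_ball ht]
  have hη0 : 0 ≤ η := (norm_nonneg _).trans (hη θs (Metric.mem_ball_self hδ))
  rw [map_smul, ← smul_sub, norm_smul, Real.norm_of_nonneg ha.le]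
  by_cases hθ : C ≤ a * ‖θ - t‖
  · have hglob : ‖g θ - g t - L (θ - t)‖ ≤ 2 * K * ‖θ - t‖ :=
      convex_univ.norm_image_sub_le_of_norm_fderiv_le' (fun x _ => hg x)
        (fun x _ => (norm_sub_le _ _).trans (by linarith [hK x, hK θs])) (mem_univ t) (mem_univ θ)
    rw [indicator_of_mem (show θ ∈ {θ | C ≤ a * ‖θ - t‖} from hθ)]
    nlinarith [mul_le_mul_of_nonneg_left hglob ha.le, mul_nonneg hη0 hC]
  · rw [not_le] at hθ
    have hθt : ‖θ - t‖ < δ / 2 := lt_of_mul_lt_mul_left (hθ.trans haC) ha.le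
    have hθ' : θ ∈ Metric.ball θs δ := by
      rw [Metric.mem_ball] at ht ⊢
      linarith [dist_triangle θ t θs, dist_eq_norm θ t]
    have hloc : ‖g θ - g t - L (θ - t)‖ ≤ η * ‖θ - t‖ :=
      (convex_ball θs δ).norm_image_sub_le_of_norm_fderiv_le' (fun x _ => hg x) hη
        (Metric.ball_subset_ball (by linarith) ht) hθ'
    rw [indicator_of_notMem (show θ ∉ {θ | C ≤ a * ‖θ - t‖} from not_le.mpr hθ), mul_zero,
      add_zero]
    nlinarith [mul_le_mul_of_nonneg_left hloc ha.le]

theorem tendsto_integral_smul_sub_sub_fderiv [MeasurableSpace E] [OpensMeasurableSpace E]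
    {g : E → F} (hg : Differentiable ℝ g) {K : ℝ} (hK : ∀ x, ‖fderiv ℝ g x‖ ≤ K) {θs : E}
    (hcont : ContinuousAt (fderiv ℝ g) θs) {t : ℕ → E} (ht : Tendsto t atTop (𝓝 θs))
    {a : ℕ → ℝ} (ha : Tendsto a atTop atTop) {ν : ℕ → Measure E}
    [∀ n, IsProbabilityMeasure (ν n)] (hX : AsympUnifIntegrable (fun n θ => a n * ‖θ - t n‖) ν) :
    Tendsto (fun n => ∫ θ, (a n • (g θ - g (t n)) - fderiv ℝ g θs (a n • (θ - t n))) ∂ν n)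
      atTop (𝓝 0) := by
  rw [NormedAddGroup.tendsto_nhds_zero]
  intro ε hε
  have hK0 : 0 ≤ K := (norm_nonneg _).trans (hK θs)
  obtain ⟨C, hCtail, hC⟩ :=
    ((hX.2 (ε / (4 * (K + 1))) (by positivity)).and (eventually_gt_atTop 0)).exists
  obtain ⟨δ, hδ, hη⟩ := Metric.continuousAt_iff.mp hcont (ε / (4 * C)) (by positivity)
  filter_upwards [hCtail, hX.1, ht (Metric.ball_mem_nhds θs (half_pos hδ)),
    ha.eventually_gt_atTop (2 * C / δ)] with n htail hint htn han
  have ha0 : 0 < a n := lt_trans (by positivity) han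
  have haC : C < a n * (δ / 2) := by
    rw [div_lt_iff₀ hδ] at han
    linarith
  have hset : MeasurableSet {θ | C ≤ a n * ‖θ - t n‖} :=
    measurableSet_le measurable_const
      (by fun_prop : Continuous fun θ => a n * ‖θ - t n‖).measurable
  have hbound := fun θ => norm_smul_sub_sub_fderiv_le (θ := θ) hg hK
    (fun x hx => (dist_eq_norm (fderiv ℝ g x) _ ▸ hη hx).le) htn ha0 hC.le haC
  calc ‖∫ θ, (a n • (g θ - g (t n)) - fderiv ℝ g θs (a n • (θ - t n))) ∂ν n‖
      ≤ ∫ θ, (ε / (4 * C) * C + 2 * K *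
          {θ | C ≤ a n * ‖θ - t n‖}.indicator (fun θ => a n * ‖θ - t n‖) θ) ∂ν n :=
        norm_integral_le_of_norm_le ((integrable_const _).add
          ((hint.indicator hset).const_mul _)) (.of_forall hbound)
    _ = ε / 4 + 2 * K * ∫ θ in {θ | C ≤ a n * ‖θ - t n‖}, a n * ‖θ - t n‖ ∂ν n := by
        rw [integral_add (integrable_const _) ((hint.indicator hset).const_mul _), integral_const,
          integral_const_mul, integral_indicator hset, probReal_univ, one_smul]
        field_simp
    _ ≤ ε / 4 + 2 * K * (ε / (4 * (K + 1))) := by gcongr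
    _ < ε := by
        have : 2 * K * (ε / (4 * (K + 1))) < ε / 2 := by
          rw [mul_div_assoc', div_lt_div_iff₀ (by positivity) two_pos]
          nlinarith
        linarith

lemma smul_integral_sub_eq [CompleteSpace E] [CompleteSpace F] [MeasurableSpace E]
    {μ : Measure E} [IsProbabilityMeasure μ] (L : E →L[ℝ] F) {g : E → F} {a : ℝ} {t : E}
    (hg : Integrable g μ) (hX : Integrable (fun θ => a • (θ - t)) μ) :
    a • (∫ θ, g θ ∂μ - g t)
      = ∫ θ, (a • (g θ - g t) - L (a • (θ - t))) ∂μ + L (∫ θ, a • (θ - t) ∂μ) := by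
  have hgt : Integrable (fun θ => a • (g θ - g t)) μ := (hg.sub (integrable_const (g t))).smul a
  rw [integral_sub hgt (L.integrable_comp hX),
    ← L.integral_comp_comm hX, sub_add_cancel, integral_smul, integral_sub hg (integrable_const _),
    integral_const, probReal_univ, one_smul]

end Remainder

theorem posterior_mean_plug_in_approximation_general
    {m d : ℕ}
    (J : Matrix (Fin m) (Fin m) ℝ)
    (θs : EuclideanSpace ℝ (Fin m)) (t : ℕ → EuclideanSpace ℝ (Fin m))
    (ht : Tendsto t atTop (𝓝 θs))
    (ν γ : ℕ → Measure (EuclideanSpace ℝ (Fin m)))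
    (hν : ∀ n, IsProbabilityMeasure (ν n)) (hγprob : ∀ n, IsProbabilityMeasure (γ n))
    -- γ n is the Gaussian measure N(t n, J/n)
    (hγ : ∀ n : ℕ, ∀ v : EuclideanSpace ℝ (Fin m),
      Measure.map (fun θ => @inner ℝ _ _ v θ) (γ n)
        = gaussianReal (@inner ℝ _ _ v (t n))
            (Real.toNNReal ((∑ i, ∑ j, v i * J i j * v j) / n)))
    -- total variation distance between ν n and γ n tends to 0
    (hTV : ∀ ε : ℝ, 0 < ε → ∀ᶠ n in atTop,
      ∀ s : Set (EuclideanSpace ℝ (Fin m)), MeasurableSet s →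
        |(ν n s).toReal - (γ n s).toReal| ≤ ε)
    -- the laws of θ ↦ √n (θ − t n) under ν n form a uniformly integrable family
    (hUIint : ∀ n : ℕ, Integrable (fun θ => Real.sqrt n * ‖θ - t n‖) (ν n))
    (hUI : ∀ ε : ℝ, 0 < ε → ∃ C : ℝ, ∀ n : ℕ,
      ∫ θ in {θ | C ≤ Real.sqrt n * ‖θ - t n‖},
        Real.sqrt n * ‖θ - t n‖ ∂(ν n) ≤ ε)
    -- g continuously differentiable, bounded, with bounded Jacobian
    (g : EuclideanSpace ℝ (Fin m) → EuclideanSpace ℝ (Fin d))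
    (hg : ContDiff ℝ 1 g)
    (hgbdd : ∃ C : ℝ, ∀ θ, ‖g θ‖ ≤ C)
    (hDgbdd : ∃ C : ℝ, ∀ θ, ‖fderiv ℝ g θ‖ ≤ C) :
    Tendsto (fun n : ℕ => Real.sqrt n • ((∫ θ, g θ ∂(ν n)) - g (t n)))
      atTop (𝓝 0) := by
  obtain ⟨Cg, hCg⟩ := hgbdd
  obtain ⟨K, hK⟩ := hDgbdd
  have hX : AsympUnifIntegrable (fun n θ => √n * ‖θ - t n‖) ν :=
    asympUnifIntegrable_of_forall (fun _ _ => by positivity) hUIint hUI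
  have hmean := tendsto_integral_sqrt_smul_sub_of_tv_gaussian (γ := γ)
    (fun v => ∑ i, ∑ j, v i * J i j * v j) hγ hTV hX
  have hrem := tendsto_integral_smul_sub_sub_fderiv (hg.differentiable one_ne_zero) hK
    (hg.continuous_fderiv one_ne_zero).continuousAt ht
    (Real.tendsto_sqrt_atTop.comp tendsto_natCast_atTop_atTop) hX
  have hdecomp : ∀ n : ℕ, √n • ((∫ θ, g θ ∂(ν n)) - g (t n))
      = ∫ θ, (√n • (g θ - g (t n)) - fderiv ℝ g θs (√n • (θ - t n))) ∂(ν n)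
        + fderiv ℝ g θs (∫ θ, √n • (θ - t n) ∂(ν n)) := fun n =>
    smul_integral_sub_eq _
      ((integrable_const Cg).mono' hg.continuous.aestronglyMeasurable (.of_forall hCg))
      (integrable_smul_sub_of_integrable_mul_norm (Real.sqrt_nonneg _) (hUIint n))
  have hlin : Tendsto (fun n : ℕ => fderiv ℝ g θs (∫ θ, √n • (θ - t n) ∂(ν n))) atTop (𝓝 0) := by
    have := ((fderiv ℝ g θs).continuous.tendsto 0).comp hmean
    rwa [map_zero] at this
  rw [← add_zero (0 : EuclideanSpace ℝ (Fin d))]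
  exact (hrem.add hlin).congr fun n => (hdecomp n).symm

/-- The key approximation lemma in the proof of Theorem 6 of the paper (Bayesian
optimization): if the measures `ν_n` merge in total variation with Gaussian measures
`γ_n = N(t_n, J/n)` centered at `t_n → θ*`, and the laws of `θ ↦ √n·(θ − t_n)` under
`ν_n` are uniformly integrable, then for every bounded `C¹` vector field `g` with
bounded Jacobian, `√n·(∫ g dν_n − g(t_n)) → 0`. The Gaussian measures are
characterized by the laws of their one-dimensional linear projections. -/
theorem posterior_mean_plug_in_approximation
    {m d : ℕ}
    (J : Matrix (Fin m) (Fin m) ℝ) (hJ : J.PosSemidef)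
    (θs : EuclideanSpace ℝ (Fin m)) (t : ℕ → EuclideanSpace ℝ (Fin m))
    (ht : Tendsto t atTop (𝓝 θs))
    (ν γ : ℕ → Measure (EuclideanSpace ℝ (Fin m)))
    (hν : ∀ n, IsProbabilityMeasure (ν n)) (hγprob : ∀ n, IsProbabilityMeasure (γ n))
    -- γ n is the Gaussian measure N(t n, J/n)
    (hγ : ∀ n : ℕ, ∀ v : EuclideanSpace ℝ (Fin m),
      Measure.map (fun θ => @inner ℝ _ _ v θ) (γ n)
        = gaussianReal (@inner ℝ _ _ v (t n))
            (Real.toNNReal ((∑ i, ∑ j, v i * J i j * v j) / n)))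
    -- total variation distance between ν n and γ n tends to 0
    (hTV : ∀ ε : ℝ, 0 < ε → ∀ᶠ n in atTop,
      ∀ s : Set (EuclideanSpace ℝ (Fin m)), MeasurableSet s →
        |(ν n s).toReal - (γ n s).toReal| ≤ ε)
    -- the laws of θ ↦ √n (θ − t n) under ν n form a uniformly integrable family
    (hUIint : ∀ n : ℕ, Integrable (fun θ => Real.sqrt n * ‖θ - t n‖) (ν n))
    (hUI : ∀ ε : ℝ, 0 < ε → ∃ C : ℝ, ∀ n : ℕ,
      ∫ θ in {θ | C ≤ Real.sqrt n * ‖θ - t n‖},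
        Real.sqrt n * ‖θ - t n‖ ∂(ν n) ≤ ε)
    -- g continuously differentiable, bounded, with bounded Jacobian
    (g : EuclideanSpace ℝ (Fin m) → EuclideanSpace ℝ (Fin d))
    (hg : ContDiff ℝ 1 g)
    (hgbdd : ∃ C : ℝ, ∀ θ, ‖g θ‖ ≤ C)
    (hDgbdd : ∃ C : ℝ, ∀ θ, ‖fderiv ℝ g θ‖ ≤ C) :
    Tendsto (fun n : ℕ => Real.sqrt n • ((∫ θ, g θ ∂(ν n)) - g (t n)))
      atTop (𝓝 0) :=
  posterior_mean_plug_in_approximation_general J θs t ht ν γ hν hγprob hγ hTV hUIint hUI g hg hgbdd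
    hDgbdd
end
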